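/- arXiv:1502.05277 — 7 statements merged into one kernel-verified Lean document; each statement's English description precedes it below -/
import Mathlib

section
/- For every integer n ≥ 3, the tree-depth of the cycle graph C_n on n vertices equals ⌊log₂ (n−1)⌋ + 2. -/
/-- A `k`-ranking of a simple graph `G`: a labeling of the vertices with values from
`{1, …, k}` such that every path joining two distinct vertices with the same label
contains a vertex with a strictly higher label. -/
def IsRanking {V : Type*} (G : SimpleGraph V) (k : ℕ) (f : V → ℕ) : Prop :=
  (∀ v, 1 ≤ f v ∧ f v ≤ k) ∧
  ∀ ⦃u v : V⦄ (p : G.Walk u v), p.IsPath → u ≠ v → f u = f v →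
    ∃ w ∈ p.support, f u < f w

/-- The tree-depth of `G`: the least `k` such that `G` admits a `k`-ranking. -/
noncomputable def treedepth {V : Type*} (G : SimpleGraph V) : ℕ :=
  sInf {k | ∃ f, IsRanking G k f}

/-!
A ranking of a connected graph uses its largest label exactly once, since two vertices carrying
it are joined by a path with no higher label. Deleting that vertex from `C_n` leaves a path on
`n - 1` vertices ranked with one label fewer, and a path ranked with `k` labels has fewer than
`2 ^ k` vertices: its top label occurs at most once and splits it into two paths ranked with
`k - 1` labels. Conversely, give vertex `0` the top label and vertex `i ∈ {1, …, n - 1}` the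
label `ν₂(i) + 1`. A walk between two vertices with the same label either passes through `0`,
or stays on the path `1, …, n - 1` and so visits every vertex between its ends; between two
integers of equal 2-adic valuation `t` lies a multiple of `2 ^ (t + 1)`.
-/

open SimpleGraph
open scoped Fin.NatCast

theorem IsRanking.exists_lt_of_walk {V : Type*} {G : SimpleGraph V} {k : ℕ} {f : V → ℕ}
    (hf : IsRanking G k f) {u v : V} (p : G.Walk u v) (huv : u ≠ v) (hfuv : f u = f v) :
    ∃ w ∈ p.support, f u < f w := by
  classical
  obtain ⟨w, hw, hlt⟩ := hf.2 p.toPath p.toPath.2 huv hfuv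
  exact ⟨w, p.support_toPath_subset_support hw, hlt⟩

theorem IsRanking.lt_of_forall_le {V : Type*} {G : SimpleGraph V} {k : ℕ} {f : V → ℕ}
    (hf : IsRanking G k f) (hG : G.Connected) {u v : V} (hv : ∀ w, f w ≤ f v) (huv : u ≠ v) :
    f u < f v := by
  refine (hv u).lt_of_ne fun heq => ?_
  obtain ⟨w, -, hw⟩ := hf.exists_lt_of_walk (hG.preconnected u v).some huv heq
  exact (hv w).not_gt (heq ▸ hw)

/-- The path `a, a + 1, …, b - 1` joins two of its vertices by a single path, the interval
between them, so this is what being a `k`-ranking of it amounts to. -/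
def IsIntervalRanking (k : ℕ) (g : ℕ → ℕ) (a b : ℕ) : Prop :=
  (∀ i, a ≤ i → i < b → 1 ≤ g i ∧ g i ≤ k) ∧
  ∀ i j, a ≤ i → i < j → j < b → g i = g j → ∃ l, i < l ∧ l < j ∧ g i < g l

namespace IsIntervalRanking

variable {k : ℕ} {g : ℕ → ℕ} {a b : ℕ}

theorem eq_of_apply_eq_top (h : IsIntervalRanking k g a b) {i j : ℕ} (hai : a ≤ i) (hib : i < b)
    (haj : a ≤ j) (hjb : j < b) (hgi : g i = k) (hgj : g j = k) : i = j := by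
  have no_two_tops : ∀ i j, a ≤ i → i < j → j < b → g i = k → g j = k → False := by
    intro i j hai hij hjb hgi hgj
    obtain ⟨l, hil, hlj, hl⟩ := h.2 i j hai hij hjb (hgi.trans hgj.symm)
    have := (h.1 l (by omega) (by omega)).2
    omega
  rcases lt_trichotomy i j with hij | hij | hij
  · exact (no_two_tops i j hai hij hjb hgi hgj).elim
  · exact hij
  · exact (no_two_tops j i haj hij hib hgj hgi).elim

theorem of_succ (h : IsIntervalRanking (k + 1) g a b) {a' b' : ℕ} (ha : a ≤ a') (hb : b' ≤ b)
    (htop : ∀ i, a' ≤ i → i < b' → g i ≠ k + 1) : IsIntervalRanking k g a' b' := by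
  refine ⟨fun i hai hib => ?_, fun i j hai hij hjb => h.2 i j (by omega) hij (by omega)⟩
  have := h.1 i (by omega) (by omega)
  have := htop i hai hib
  omega

theorem sub_lt_two_pow (h : IsIntervalRanking k g a b) : b - a < 2 ^ k := by
  induction k generalizing a b with
  | zero =>
    by_contra hab
    have := h.1 a le_rfl (by omega)
    omega
  | succ k ih =>
    rw [pow_succ]
    by_cases htop : ∃ i, a ≤ i ∧ i < b ∧ g i = k + 1
    · obtain ⟨i, hai, hib, hgi⟩ := htop
      have left := ih (h.of_succ le_rfl hib.le fun j haj hji hgj =>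
        hji.ne (h.eq_of_apply_eq_top haj (by omega) hai hib hgj hgi))
      have right := ih (h.of_succ (a' := i + 1) (by omega) le_rfl fun j hij hjb hgj =>
        (h.eq_of_apply_eq_top hai hib (by omega) hjb hgi hgj).not_lt hij)
      omega
    · push Not at htop
      have := ih (h.of_succ le_rfl le_rfl htop)
      omega

end IsIntervalRanking

theorem padicValNat_two_pow_mul_odd {s m : ℕ} (hm : Odd m) : padicValNat 2 (2 ^ s * m) = s := by
  rw [padicValNat.mul (by positivity) hm.pos.ne', padicValNat.prime_pow,
    padicValNat.eq_zero_of_not_dvd (by simpa [← even_iff_two_dvd] using hm), add_zero]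

theorem exists_padicValNat_two_lt {i j : ℕ} (hi : 0 < i) (hij : i < j)
    (h : padicValNat 2 i = padicValNat 2 j) :
    ∃ l, i < l ∧ l < j ∧ padicValNat 2 i < padicValNat 2 l := by
  obtain ⟨s, a, ha, rfl⟩ := Nat.exists_eq_two_pow_mul_odd hi.ne'
  obtain ⟨t, b, hb, rfl⟩ := Nat.exists_eq_two_pow_mul_odd (hi.trans hij).ne'
  rw [padicValNat_two_pow_mul_odd ha, padicValNat_two_pow_mul_odd hb] at h
  subst h
  have hab : a + 1 < b := by
    have := (Nat.mul_lt_mul_left (by positivity)).1 hij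
    obtain ⟨a', rfl⟩ := ha
    obtain ⟨b', rfl⟩ := hb
    omega
  refine ⟨2 ^ s * (a + 1), by gcongr; omega, by gcongr, ?_⟩
  rw [padicValNat_two_pow_mul_odd ha, padicValNat.mul (by positivity) (by omega),
    padicValNat.prime_pow]
  have := one_le_padicValNat_of_dvd (by omega) ha.add_one.two_dvd
  omega

theorem Fin.val_add_one_of_add_one_ne_zero {n : ℕ} {u : Fin (n + 2)} (h : u + 1 ≠ 0) :
    (u + 1).val = u.val + 1 := by
  refine Fin.val_add_one_of_lt' (Nat.lt_of_not_le fun hge => h ?_)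
  rw [show u = Fin.last (n + 1) from Fin.ext (by simp; omega), Fin.last_add_one]

namespace SimpleGraph

variable {n : ℕ}

theorem cycleGraph_adj_add_one (u : Fin (n + 2)) : (cycleGraph (n + 2)).Adj u (u + 1) :=
  cycleGraph_adj.2 (Or.inr (add_sub_cancel_left u 1))

theorem exists_walk_cycleGraph_add (u : Fin (n + 2)) {i j : ℕ} (hij : i ≤ j) :
    ∃ p : (cycleGraph (n + 2)).Walk (u + i) (u + j),
      ∀ w ∈ p.support, ∃ l, i ≤ l ∧ l ≤ j ∧ w = u + l := by
  induction j, hij using Nat.le_induction with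
  | base => exact ⟨.nil, by simpa using ⟨i, le_rfl, le_rfl, rfl⟩⟩
  | succ j hij ih =>
    obtain ⟨p, hp⟩ := ih
    have hadj : (cycleGraph (n + 2)).Adj (u + j) (u + (j + 1 : ℕ)) := by
      rw [Nat.cast_succ, ← add_assoc]
      exact cycleGraph_adj_add_one _
    refine ⟨p.concat hadj, fun w hw => ?_⟩
    rw [Walk.support_concat, List.mem_append, List.mem_singleton] at hw
    rcases hw with hw | rfl
    · obtain ⟨l, hil, hlj, rfl⟩ := hp w hw
      exact ⟨l, hil, by omega, rfl⟩
    · exact ⟨j + 1, by omega, le_rfl, rfl⟩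

theorem cycleGraph_val_eq_add_one_or_of_adj {u v : Fin (n + 2)}
    (h : (cycleGraph (n + 2)).Adj u v) (hu : u ≠ 0) (hv : v ≠ 0) :
    v.val = u.val + 1 ∨ u.val = v.val + 1 := by
  rcases cycleGraph_adj.1 h with h | h
  · obtain rfl := sub_eq_iff_eq_add'.1 h
    exact Or.inr (Fin.val_add_one_of_add_one_ne_zero hu)
  · obtain rfl := sub_eq_iff_eq_add'.1 h
    exact Or.inl (Fin.val_add_one_of_add_one_ne_zero hv)

theorem Walk.mem_support_of_val_le_of_le_val {u v : Fin (n + 2)}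
    (p : (cycleGraph (n + 2)).Walk u v) (h0 : 0 ∉ p.support) {w : Fin (n + 2)}
    (huw : u.val ≤ w.val) (hwv : w.val ≤ v.val) : w ∈ p.support := by
  induction p with
  | nil => simp [Fin.ext (le_antisymm hwv huw)]
  | @cons u b v hadj q ih =>
    rw [support_cons, List.mem_cons] at h0 ⊢
    push Not at h0
    rcases eq_or_ne w u with hwu | hwu
    · exact Or.inl hwu
    have hb : b ≠ 0 := fun hb => h0.2 (hb ▸ q.start_mem_support)
    have hstep := cycleGraph_val_eq_add_one_or_of_adj hadj (Ne.symm h0.1) hb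
    have hwu' := Fin.val_ne_of_ne hwu
    exact Or.inr (ih h0.2 (by omega) hwv)

end SimpleGraph

theorem log_add_two_le_of_isRanking_cycleGraph {n k : ℕ} {f : Fin (n + 2) → ℕ}
    (hf : IsRanking (cycleGraph (n + 2)) k f) : Nat.log 2 (n + 1) + 2 ≤ k := by
  obtain ⟨v, hv⟩ := Finite.exists_max f
  have add_cast_inj :
      ∀ i j, i < n + 2 → j < n + 2 → v + (i : Fin (n + 2)) = v + j → i = j := by
    intro i j hi hj h
    simpa [Fin.val_cast_of_lt hi, Fin.val_cast_of_lt hj] using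
      congrArg Fin.val (add_left_cancel h)
  have hrank : IsIntervalRanking (k - 1) (fun i => f (v + i)) 1 (n + 2) := by
    refine ⟨fun i hi hin => ?_, fun i j hi hij hjn hfij => ?_⟩
    · have hne : v + (i : Fin (n + 2)) ≠ v := fun h => by
        have := add_cast_inj i 0 hin (by omega) (by simpa using h)
        omega
      have hlt := hf.lt_of_forall_le cycleGraph_connected hv hne
      have hpos := (hf.1 (v + i)).1
      have hle := (hf.1 v).2
      dsimp only
      constructor <;> omega
    · obtain ⟨p, hp⟩ := exists_walk_cycleGraph_add v hij.le
      obtain ⟨w, hw, hlt⟩ := hf.exists_lt_of_walk p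
        (fun h => hij.ne (add_cast_inj i j (by omega) hjn h)) hfij
      obtain ⟨l, hil, hlj, rfl⟩ := hp w hw
      refine ⟨l, hil.lt_of_ne ?_, hlj.lt_of_ne ?_, hlt⟩ <;> rintro rfl <;> simp_all
  have hpow : n + 1 < 2 ^ (k - 1) := hrank.sub_lt_two_pow
  have := Nat.log_lt_of_lt_pow (by omega) hpow
  omega

noncomputable def cycleRanking (n : ℕ) (v : Fin (n + 2)) : ℕ :=
  if v = 0 then Nat.log 2 (n + 1) + 2 else padicValNat 2 v + 1

theorem cycleRanking_lt {n : ℕ} {v : Fin (n + 2)} (hv : v ≠ 0) :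
    cycleRanking n v < Nat.log 2 (n + 1) + 2 := by
  have := (padicValNat_le_nat_log (p := 2) v).trans
    (Nat.log_mono_right (by omega : v.val ≤ n + 1))
  rw [cycleRanking, if_neg hv]
  omega

theorem exists_cycleRanking_lt_of_val_lt {n : ℕ} {u v : Fin (n + 2)}
    (p : (cycleGraph (n + 2)).Walk u v) (huv : u.val < v.val)
    (hfuv : cycleRanking n u = cycleRanking n v) :
    ∃ w ∈ p.support, cycleRanking n u < cycleRanking n w := by
  have hv : v ≠ 0 := fun h => by simp [h] at huv
  have hu : u ≠ 0 := by
    rintro rfl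
    have := cycleRanking_lt hv
    rw [cycleRanking, if_pos rfl] at hfuv
    omega
  by_cases h0 : (0 : Fin (n + 2)) ∈ p.support
  · exact ⟨0, h0, by simpa [cycleRanking] using cycleRanking_lt hu⟩
  obtain ⟨l, hul, hlv, hl⟩ := exists_padicValNat_two_lt (Fin.pos_iff_ne_zero.2 hu) huv
    (by simpa [cycleRanking, hu, hv] using hfuv)
  refine ⟨⟨l, by omega⟩, p.mem_support_of_val_le_of_le_val h0 hul.le hlv.le, ?_⟩
  have hl0 : (⟨l, by omega⟩ : Fin (n + 2)) ≠ 0 := Fin.ne_of_val_ne (by simp; omega)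
  simp only [cycleRanking, hu, hl0, if_false]
  omega

theorem isRanking_cycleRanking (n : ℕ) :
    IsRanking (cycleGraph (n + 2)) (Nat.log 2 (n + 1) + 2) (cycleRanking n) := by
  refine ⟨fun v => ?_, fun u v p _ huv hfuv => ?_⟩
  · by_cases hv : v = 0
    · simp [cycleRanking, hv]
    · exact ⟨by simp [cycleRanking, hv], (cycleRanking_lt hv).le⟩
  rcases (Fin.val_ne_of_ne huv).lt_or_gt with hlt | hlt
  · exact exists_cycleRanking_lt_of_val_lt p hlt hfuv
  · simpa [hfuv] using exists_cycleRanking_lt_of_val_lt p.reverse hlt hfuv.symm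

/-- For every integer `n ≥ 3`, the tree-depth of the cycle graph `C_n` on `n` vertices
equals `⌊log₂ (n−1)⌋ + 2`. -/
theorem treedepth_cycleGraph (n : ℕ) (hn : 3 ≤ n) :
    treedepth (SimpleGraph.cycleGraph n) = Nat.log 2 (n - 1) + 2 := by
  obtain ⟨n, rfl⟩ : ∃ m, n = m + 2 := ⟨n - 2, by omega⟩
  refine le_antisymm (Nat.sInf_le ⟨_, isRanking_cycleRanking n⟩)
    (le_csInf ⟨_, _, isRanking_cycleRanking n⟩ ?_)
  rintro k ⟨f, hf⟩
  exact log_add_two_le_of_isRanking_cycleGraph hf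
end

section
/- For every integer k ≥ 3, the cycle graph C_{2^{k−2}+1} has tree-depth k, and for every vertex v of C_{2^{k−2}+1} there exists a k-ranking in which v is the unique vertex with label 1. -/
/-!
Give vertex `0` of `C_{2^m+1}` the label `1` and vertex `x ∈ [1, 2^m]` the label `ν₂(x) + 2`.
Two vertices with the same label `s + 2` are separated, on either arc of the cycle, by a
nonzero multiple of `2^(s+1)` (on the arc through `0` this is `2^m`), which has a higher label.
Rotating this ranking moves its unique label `1` to any vertex.

Conversely, in a ranking of a connected graph the largest label occurs exactly once. Splitting a
path at that vertex shows that a ranking of a path on `N` vertices with labels `≤ m` forces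
`N < 2^m`; removing it from `C_{N+1}` leaves a path on `N` vertices, so `N < 2^(k-1)`.
-/

namespace SimpleGraph

theorem Walk.apply_eq_of_forall_mem_support {V α : Type*} {G : SimpleGraph V}
    {P : V → Prop} (g : V → α) (hg : ∀ x y, G.Adj x y → P x → P y → g x = g y) :
    ∀ {u v : V} (p : G.Walk u v), (∀ w ∈ p.support, P w) → g u = g v
  | _, _, .nil, _ => rfl
  | _, _, .cons h p, hP => by
    simp only [Walk.support_cons, List.mem_cons, forall_eq_or_imp] at hP
    exact (hg _ _ h hP.1 (hP.2 _ p.start_mem_support)).trans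
      (p.apply_eq_of_forall_mem_support g hg hP.2)

def pathGraph.segmentEmbedding {b N : ℕ} (a : ℕ) (h : b + a ≤ N) :
    pathGraph b ↪g pathGraph N where
  toFun i := ⟨i + a, by omega⟩
  inj' i j hij := by simpa [Fin.ext_iff] using hij
  map_rel_iff' {i j} := by
    simp only [pathGraph_adj]
    change i.val + a + 1 = j.val + a ∨ j.val + a + 1 = i.val + a ↔ _
    omega

theorem cycleGraph_adj_add_right {n : ℕ} [NeZero n] {x y : Fin n} (d : Fin n) :
    (cycleGraph n).Adj (x + d) (y + d) ↔ (cycleGraph n).Adj x y := by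
  simp [cycleGraph_adj']

def cycleGraph.addRight {n : ℕ} [NeZero n] (d : Fin n) : cycleGraph n ≃g cycleGraph n where
  toEquiv := Equiv.addRight d
  map_rel_iff' := cycleGraph_adj_add_right d

theorem cycleGraph_val_of_adj {N : ℕ} {x y : Fin (N + 1)} (h : (cycleGraph (N + 1)).Adj x y) :
    x.val + 1 = y.val ∨ y.val + 1 = x.val ∨ (x.val = N ∧ y.val = 0) ∨
      (x.val = 0 ∧ y.val = N) := by
  have key : ∀ a b : Fin (N + 1), (a - b).val = 1 →
      a.val = b.val + 1 ∨ (a.val = 0 ∧ b.val = N) := by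
    intro a b hab
    rcases le_or_gt b a with hba | hab'
    · rw [Fin.coe_sub_iff_le.2 hba] at hab; omega
    · rw [Fin.coe_sub_iff_lt.2 hab'] at hab; omega
  rcases cycleGraph_adj'.1 h with h | h
  · have := key x y h; omega
  · have := key y x h; omega

theorem cycleGraph_val_div_eq_of_adj {N q : ℕ} (hq : q ∣ N) {x y : Fin (N + 1)}
    (hxy : (cycleGraph (N + 1)).Adj x y) (hx : x.val = 0 ∨ ¬q ∣ x.val)
    (hy : y.val = 0 ∨ ¬q ∣ y.val) : x.val / q = y.val / q := by
  rcases cycleGraph_val_of_adj hxy with h | h | ⟨hxN, hy0⟩ | ⟨hx0, hyN⟩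
  · rw [← h, Nat.succ_div_of_not_dvd (by rw [h]; omega)]
  · rw [← h, Nat.succ_div_of_not_dvd (by rw [h]; omega)]
  · rcases hx with hx0 | hx
    · rw [hx0, hy0]
    · exact absurd (by rwa [hxN]) hx
  · rcases hy with hy0 | hy
    · rw [hx0, hy0]
    · exact absurd (by rwa [hyN]) hy

end SimpleGraph

open SimpleGraph

theorem mod_two_pow_succ_padicValNat {x : ℕ} (hx : x ≠ 0) :
    x % 2 ^ (padicValNat 2 x + 1) = 2 ^ padicValNat 2 x := by
  have hdvd := pow_padicValNat_dvd (p := 2) (n := x)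
  have hndvd := pow_succ_padicValNat_not_dvd (p := 2) hx
  generalize padicValNat 2 x = s at *
  obtain ⟨c, rfl⟩ := hdvd
  have hodd : c % 2 = 1 := by
    by_contra hc
    rw [pow_succ] at hndvd
    exact hndvd (Nat.mul_dvd_mul_left _ (Nat.dvd_of_mod_eq_zero (by omega)))
  rw [pow_succ, Nat.mul_mod_mul_left, hodd, mul_one]

theorem eq_of_padicValNat_two_eq_of_div_eq {x y : ℕ} (hx : x ≠ 0) (hy : y ≠ 0)
    (hxy : padicValNat 2 x = padicValNat 2 y)
    (hdiv : x / 2 ^ (padicValNat 2 x + 1) = y / 2 ^ (padicValNat 2 x + 1)) : x = y := by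
  rw [← Nat.div_add_mod x (2 ^ (padicValNat 2 x + 1)),
    ← Nat.div_add_mod y (2 ^ (padicValNat 2 x + 1)), hdiv,
    mod_two_pow_succ_padicValNat hx, hxy, mod_two_pow_succ_padicValNat hy]

theorem padicValNat_two_le_of_le_two_pow {m x : ℕ} (hx : x ≠ 0) (hxm : x ≤ 2 ^ m) :
    padicValNat 2 x ≤ m := by
  by_contra! h
  have := Nat.le_of_dvd (by omega) ((padicValNat_dvd_iff_le hx).2 h)
  rw [pow_succ] at this
  omega

section Ranking

variable {V W : Type*} {G : SimpleGraph V} {k : ℕ} {f : V → ℕ}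

theorem treedepth_eq_of_isRanking (hf : IsRanking G k f)
    (hmin : ∀ k' g, IsRanking G k' g → k ≤ k') : treedepth G = k :=
  le_antisymm (Nat.sInf_le ⟨f, hf⟩) (le_csInf ⟨k, f, hf⟩ fun _ ⟨g, hg⟩ => hmin _ g hg)

theorem IsRanking.comap {H : SimpleGraph W} {k' : ℕ} (hf : IsRanking G k f) (φ : H.Copy G)
    (hk' : ∀ w, f (φ w) ≤ k') : IsRanking H k' (f ∘ φ) := by
  refine ⟨fun w => ⟨(hf.1 _).1, hk' w⟩, fun u v p hp huv hfuv => ?_⟩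
  obtain ⟨x, hx, hlt⟩ := hf.2 (p.map φ.toHom) (hp.map φ.injective) (φ.injective.ne huv) hfuv
  rw [Walk.support_map, List.mem_map] at hx
  obtain ⟨y, hy, rfl⟩ := hx
  exact ⟨y, hy, hlt⟩

theorem IsRanking.exists_forall_lt [Finite V] [Nonempty V] (hG : G.Preconnected)
    (hf : IsRanking G k f) : ∃ w, ∀ v ≠ w, f v < f w := by
  classical
  obtain ⟨w, hw⟩ := Finite.exists_max f
  refine ⟨w, fun v hvw => (hw v).lt_of_ne fun hfvw => ?_⟩
  obtain ⟨p⟩ := hG v w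
  obtain ⟨x, -, hx⟩ := hf.2 p.toPath.1 p.toPath.2 hvw hfvw
  exact absurd (hw x) (by omega)

end Ranking

theorem IsRanking.lt_two_pow_of_pathGraph :
    ∀ {m N : ℕ} {f : Fin N → ℕ}, IsRanking (pathGraph N) m f → N < 2 ^ m
  | 0, 0, _, _ | _ + 1, 0, _, _ => Nat.two_pow_pos _
  | 0, _ + 1, _, hf => absurd (hf.1 0) (by omega)
  | m + 1, N + 1, f, hf => by
    obtain ⟨w, hw⟩ := hf.exists_forall_lt (pathGraph_preconnected _)
    have hw_lt := w.isLt
    have hle : ∀ v : Fin (N + 1), v.val ≠ w.val → f v ≤ m := fun v hv => by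
      have := (hf.1 w).2
      have := hw v (Fin.ne_of_val_ne hv)
      omega
    have hleft := (hf.comap (pathGraph.segmentEmbedding 0 (b := w) (by omega)).toCopy
      fun i => hle _ (show i.val + 0 ≠ w by omega)).lt_two_pow_of_pathGraph
    have hright := (hf.comap (pathGraph.segmentEmbedding (w + 1) (b := N - w) (by omega)).toCopy
      fun i => hle _ (show i.val + (w + 1) ≠ w by omega)).lt_two_pow_of_pathGraph
    rw [pow_succ]
    omega

theorem IsRanking.lt_two_pow_of_cycleGraph {N k : ℕ} {f : Fin (N + 1) → ℕ}
    (hf : IsRanking (cycleGraph (N + 1)) k f) : N < 2 ^ (k - 1) := by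
  obtain ⟨w, hw⟩ := hf.exists_forall_lt cycleGraph_preconnected
  -- the arc `w + 1, …, w + N`, which avoids `w`
  let φ : (pathGraph N).Copy (cycleGraph (N + 1)) :=
    (cycleGraph.addRight (w + 1)).toCopy.comp <| (Copy.ofLE _ _ pathGraph_le_cycleGraph).comp
      (pathGraph.segmentEmbedding 0 (by omega)).toCopy
  refine (hf.comap φ fun i => ?_).lt_two_pow_of_pathGraph
  have hne : φ i ≠ w := fun h => Fin.succ_ne_zero i <| by
    change i.castSucc + (w + 1) = w at h
    rwa [← add_assoc, add_right_comm, add_eq_right, Fin.coeSucc_eq_succ] at h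
  have := hw _ hne
  have := (hf.1 w).2
  omega

def rulerLabel (x : ℕ) : ℕ := if x = 0 then 1 else padicValNat 2 x + 2

theorem rulerLabel_eq_one_iff {x : ℕ} : rulerLabel x = 1 ↔ x = 0 := by
  unfold rulerLabel; split_ifs <;> omega

theorem isRanking_rulerLabel (m : ℕ) :
    IsRanking (cycleGraph (2 ^ m + 1)) (m + 2) fun x => rulerLabel x.val := by
  refine ⟨fun x => ?_, fun u v p _ huv hfuv => ?_⟩
  · show 1 ≤ rulerLabel x.val ∧ rulerLabel x.val ≤ m + 2
    unfold rulerLabel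
    split_ifs with hx
    · omega
    · have := padicValNat_two_le_of_le_two_pow hx (Nat.lt_succ_iff.1 x.isLt)
      omega
  beta_reduce at hfuv
  by_contra! hmax
  have hzero : u.val = 0 ↔ v.val = 0 := by
    rw [← rulerLabel_eq_one_iff, hfuv, rulerLabel_eq_one_iff]
  have hu0 : u.val ≠ 0 := fun hu0 => huv (Fin.ext (by rw [hu0, hzero.1 hu0]))
  have hv0 : v.val ≠ 0 := hzero.not.1 hu0
  have hs : padicValNat 2 u.val = padicValNat 2 v.val := by
    simpa [rulerLabel, hu0, hv0] using hfuv
  refine huv (Fin.ext (eq_of_padicValNat_two_eq_of_div_eq hu0 hv0 hs ?_))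
  rcases lt_or_ge (padicValNat 2 u.val) m with hsm | hsm
  · -- each vertex of `p`, of label `≤ ν₂ u + 2`, is `0` or not a multiple of `2 ^ (ν₂ u + 1)`
    refine p.apply_eq_of_forall_mem_support (fun x => x.val / 2 ^ (padicValNat 2 u.val + 1))
      (fun x y hxy hx hy => cycleGraph_val_div_eq_of_adj (pow_dvd_pow 2 hsm) hxy hx hy)
      fun w hw => or_iff_not_imp_left.2 fun hw0 hdvd => ?_
    have := (padicValNat_dvd_iff_le hw0).1 hdvd
    have := hmax w hw
    simp only [rulerLabel, hw0, hu0, if_false] at this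
    omega
  · have : 2 ^ m < 2 ^ (padicValNat 2 u.val + 1) := Nat.pow_lt_pow_right (by norm_num) (by omega)
    rw [Nat.div_eq_of_lt (by omega), Nat.div_eq_of_lt (by omega)]

theorem treedepth_cycleGraph_two_pow_add_one (m : ℕ) :
    treedepth (cycleGraph (2 ^ m + 1)) = m + 2 :=
  treedepth_eq_of_isRanking (isRanking_rulerLabel m) fun k _ hg => by
    have := (Nat.pow_lt_pow_iff_right (by norm_num)).1 hg.lt_two_pow_of_cycleGraph
    omega

theorem exists_isRanking_cycleGraph_eq_one_iff (m : ℕ) (v : Fin (2 ^ m + 1)) :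
    ∃ f, IsRanking (cycleGraph (2 ^ m + 1)) (m + 2) f ∧ ∀ w, f w = 1 ↔ w = v :=
  ⟨_, (isRanking_rulerLabel m).comap (cycleGraph.addRight (-v)).toCopy
    fun _ => ((isRanking_rulerLabel m).1 _).2, fun w => by
      simp [cycleGraph.addRight, rulerLabel_eq_one_iff, Fin.ext_iff, ← sub_eq_add_neg,
        sub_eq_zero]⟩

/-- For every `k ≥ 3`, the cycle `C_{2^{k-2}+1}` has tree-depth `k`, and every vertex is
the unique vertex with label 1 in some `k`-ranking. -/
theorem cycleGraph_treedepth_and_oneUnique (k : ℕ) (hk : 3 ≤ k) :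
    treedepth (SimpleGraph.cycleGraph (2 ^ (k - 2) + 1)) = k ∧
    ∀ v : Fin (2 ^ (k - 2) + 1), ∃ f : Fin (2 ^ (k - 2) + 1) → ℕ,
      IsRanking (SimpleGraph.cycleGraph (2 ^ (k - 2) + 1)) k f ∧
      f v = 1 ∧ ∀ w, f w = 1 → w = v := by
  obtain ⟨m, rfl⟩ : ∃ m, k = m + 2 := ⟨k - 2, by omega⟩
  rw [Nat.add_sub_cancel]
  refine ⟨treedepth_cycleGraph_two_pow_add_one m, fun v => ?_⟩
  obtain ⟨f, hf, hone⟩ := exists_isRanking_cycleGraph_eq_one_iff m v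
  exact ⟨f, hf, (hone v).2 rfl, fun w => (hone w).1⟩
end

section
/- For every integer k ≥ 1, the path graph P_{2^{k−1}} has tree-depth k, and for every vertex v of P_{2^{k−1}} there exists a k-ranking in which v is the unique vertex with label 1. -/
open SimpleGraph

/-! The lower bound is by induction: in a ranking of a connected graph the top label occurs
exactly once, and removing its vertex from `P_{2^(K+1)}` leaves a copy of `P_{2^K}` labelled by
`{1, …, K}`.

For the upper bound, the ruler labeling `j ↦ v₂(j + 1) + 1` is a `K`-ranking of `P_{2^K - 1}`:
between two integers of equal 2-adic valuation lies one of larger valuation. Inserting a new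
vertex labelled `1` anywhere and raising all other labels by one gives a `(K + 1)`-ranking of
`P_{2^K}` with a unique `1`, because a path through the new vertex still passes through every
old vertex between its ends. -/

theorem exists_between_lt_padicValNat_two {a b : ℕ} (ha : a ≠ 0) (hab : a < b)
    (h : padicValNat 2 a = padicValNat 2 b) :
    ∃ c, a < c ∧ c < b ∧ padicValNat 2 a < padicValNat 2 c := by
  -- `a = 2^t x` and `b = 2^t y` with `x < y` both odd, so `c = 2^t (x + 1)` works.
  obtain ⟨t, ht⟩ : ∃ t, padicValNat 2 a = t := ⟨_, rfl⟩
  obtain ⟨x, rfl⟩ : 2 ^ t ∣ a := ht ▸ pow_padicValNat_dvd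
  rw [ht] at h ⊢
  obtain ⟨y, rfl⟩ : 2 ^ t ∣ b := h ▸ pow_padicValNat_dvd
  have hodd : ∀ z, 2 ^ t * z ≠ 0 → padicValNat 2 (2 ^ t * z) = t → ¬ 2 ∣ z := by
    intro z hz hv h2
    refine pow_succ_padicValNat_not_dvd (p := 2) hz ?_
    rw [hv, pow_succ]
    exact mul_dvd_mul_left _ h2
  have hx := hodd x ha ht
  have hy := hodd y (by omega) h.symm
  have hxy : x + 1 < y := by
    have := Nat.lt_of_mul_lt_mul_left hab
    omega
  refine ⟨2 ^ t * (x + 1), by gcongr; omega, by gcongr, ?_⟩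
  have hdvd : 2 ^ (t + 1) ∣ 2 ^ t * (x + 1) := by
    rw [pow_succ]
    exact mul_dvd_mul_left _ (by omega)
  have := (padicValNat_dvd_iff_le (by positivity)).1 hdvd
  omega

namespace IsRanking

variable {V W : Type*} {G : SimpleGraph V} {H : SimpleGraph W} {k : ℕ} {f : V → ℕ}

theorem of_forall_le {k' : ℕ} (h : IsRanking G k f) (hk : ∀ v, f v ≤ k') : IsRanking G k' f :=
  ⟨fun v => ⟨(h.1 v).1, hk v⟩, h.2⟩

theorem comp_embedding (h : IsRanking G k f) (φ : H ↪g G) : IsRanking H k (f ∘ φ) := by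
  refine ⟨fun v => h.1 (φ v), fun u v p hp huv huv' => ?_⟩
  obtain ⟨w, hw, hlt⟩ := h.2 (p.map φ.toHom) (hp.map φ.injective) (φ.injective.ne huv) huv'
  rw [Walk.support_map, List.mem_map] at hw
  obtain ⟨z, hz, rfl⟩ := hw
  exact ⟨z, hz, hlt⟩

theorem exists_forall_ne_lt [Nonempty V] (h : IsRanking G k f) (hG : G.Preconnected) :
    ∃ u, ∀ w ≠ u, f w < f u := by
  classical
  have hbdd : BddAbove (Set.range f) := ⟨k, by rintro _ ⟨v, rfl⟩; exact (h.1 v).2⟩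
  obtain ⟨u, hu⟩ := Nat.sSup_mem (Set.range_nonempty f) hbdd
  refine ⟨u, fun w hw => (hu ▸ le_csSup hbdd ⟨w, rfl⟩).lt_of_ne fun heq => ?_⟩
  obtain ⟨q⟩ := hG w u
  obtain ⟨x, -, hx⟩ := h.2 q.toPath.1 q.toPath.2 hw heq
  exact (hu ▸ le_csSup hbdd ⟨x, rfl⟩).not_gt (heq ▸ hx)

end IsRanking

def pathGraphShiftEmbedding {m n : ℕ} (a : ℕ) (h : a + m ≤ n) : pathGraph m ↪g pathGraph n where
  toFun i := ⟨a + i, by omega⟩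
  inj' i j hij := Fin.ext (by simpa using hij)
  map_rel_iff' {i j} := by
    change (pathGraph n).Adj ⟨a + i, _⟩ ⟨a + j, _⟩ ↔ _
    simp only [pathGraph_adj]
    omega

theorem not_isRanking_pathGraph_two_pow (K : ℕ) (f : Fin (2 ^ K) → ℕ) :
    ¬ IsRanking (pathGraph (2 ^ K)) K f := by
  induction K with
  | zero => exact fun h => absurd (h.1 0) (by omega)
  | succ K ih =>
    intro h
    obtain ⟨u, hu⟩ := h.exists_forall_ne_lt (pathGraph_preconnected _)
    obtain ⟨a, ha, hau⟩ : ∃ a, a + 2 ^ K ≤ 2 ^ (K + 1) ∧ (u.1 < a ∨ a + 2 ^ K ≤ u.1) := by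
      have := u.2
      have : 2 ^ (K + 1) = 2 ^ K + 2 ^ K := by ring
      exact if hu : u.1 < 2 ^ K then ⟨2 ^ K, by omega, .inl hu⟩ else ⟨0, by omega, .inr (by omega)⟩
    refine ih _ ((h.comp_embedding (pathGraphShiftEmbedding a ha)).of_forall_le fun i => ?_)
    have hne : pathGraphShiftEmbedding a ha i ≠ u := fun heq => by
      have : a + i.1 = u.1 := congrArg Fin.val heq
      omega
    have := hu _ hne
    have := (h.1 u).2
    simp only [Function.comp_apply]
    omega

def HasHigherBetween {α : Type*} [Preorder α] (f : α → ℕ) : Prop :=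
  ∀ a b, a < b → f a = f b → ∃ w, a < w ∧ w < b ∧ f a < f w

theorem SimpleGraph.Walk.mem_support_of_le_of_le_pathGraph {n : ℕ} {u v : Fin n}
    (p : (pathGraph n).Walk u v) {m : Fin n} (hu : u ≤ m) (hv : m ≤ v) : m ∈ p.support := by
  induction p with
  | nil => simp [le_antisymm hv hu]
  | @cons x y z hxy q ih =>
    rcases hu.eq_or_lt with rfl | hlt
    · simp
    · have := pathGraph_adj.1 hxy
      exact List.mem_cons_of_mem _ (ih (Fin.le_def.2 (by rw [Fin.lt_def] at hlt; omega)) hv)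

theorem isRanking_pathGraph_of_hasHigherBetween {n k : ℕ} {f : Fin n → ℕ}
    (hf : ∀ v, 1 ≤ f v ∧ f v ≤ k) (hsep : HasHigherBetween f) : IsRanking (pathGraph n) k f := by
  refine ⟨hf, fun u v p _ huv heq => ?_⟩
  rcases huv.lt_or_gt with hlt | hlt
  · obtain ⟨w, huw, hwv, hw⟩ := hsep u v hlt heq
    exact ⟨w, Walk.mem_support_of_le_of_le_pathGraph p huw.le hwv.le, hw⟩
  · obtain ⟨w, hvw, hwu, hw⟩ := hsep v u hlt heq.symm
    refine ⟨w, ?_, heq ▸ hw⟩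
    simpa using Walk.mem_support_of_le_of_le_pathGraph p.reverse hvw.le hwu.le

theorem HasHigherBetween.insertNth {n : ℕ} {g : Fin n → ℕ} (hg : HasHigherBetween g)
    (p : Fin (n + 1)) {x : ℕ} (hx : ∀ j, g j ≠ x) :
    HasHigherBetween (Fin.insertNth (α := fun _ => ℕ) p x g) := by
  intro a b hab heq
  rcases p.eq_self_or_eq_succAbove a with rfl | ⟨i, rfl⟩
  · obtain ⟨j, rfl⟩ := Fin.exists_succAbove_eq hab.ne'
    simp only [Fin.insertNth_apply_same, Fin.insertNth_apply_succAbove] at heq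
    exact absurd heq.symm (hx j)
  rcases p.eq_self_or_eq_succAbove b with rfl | ⟨j, rfl⟩
  · simp only [Fin.insertNth_apply_same, Fin.insertNth_apply_succAbove] at heq
    exact absurd heq (hx i)
  simp only [Fin.insertNth_apply_succAbove] at heq ⊢
  obtain ⟨w, hiw, hwj, hw⟩ := hg i j (Fin.succAbove_lt_succAbove_iff.1 hab) heq
  exact ⟨p.succAbove w, Fin.succAbove_lt_succAbove_iff.2 hiw, Fin.succAbove_lt_succAbove_iff.2 hwj,
    by simpa using hw⟩

theorem hasHigherBetween_padicValNat_two_succ_add (n c : ℕ) :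
    HasHigherBetween (fun j : Fin n => padicValNat 2 (j + 1) + c) := by
  intro a b hab heq
  obtain ⟨m, ham, hmb, hm⟩ :=
    exists_between_lt_padicValNat_two (a := a + 1) (b := b + 1) (by omega) (by simpa using hab)
      (by simpa using heq)
  refine ⟨⟨m - 1, by omega⟩, Fin.lt_def.2 (by simp; omega), Fin.lt_def.2 (by simp; omega), ?_⟩
  simp only [Nat.sub_add_cancel (by omega : 1 ≤ m)]
  omega

theorem exists_isRanking_pathGraph_eq_one_iff {K N : ℕ} (hN : N ≤ 2 ^ K) (v : Fin N) :
    ∃ f : Fin N → ℕ, IsRanking (pathGraph N) (K + 1) f ∧ ∀ w, f w = 1 ↔ w = v := by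
  obtain ⟨n, rfl⟩ := Nat.exists_eq_add_one_of_ne_zero v.pos.ne'
  let g := fun j : Fin n => padicValNat 2 (j + 1) + 2
  have hg : ∀ j, 2 ≤ g j ∧ g j ≤ K + 1 := fun j => by
    have : padicValNat 2 (j + 1) < K :=
      (padicValNat_le_nat_log _).trans_lt (Nat.log_lt_of_lt_pow (by omega) (by omega))
    simp only [g]
    omega
  have hg1 : ∀ j, g j ≠ 1 := fun j => by have := hg j; omega
  refine ⟨Fin.insertNth (α := fun _ => ℕ) v 1 g, isRanking_pathGraph_of_hasHigherBetween
    (fun w => ?_) ((hasHigherBetween_padicValNat_two_succ_add n 2).insertNth v hg1), fun w => ?_⟩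
  all_goals rcases v.eq_self_or_eq_succAbove w with rfl | ⟨j, rfl⟩
  · simp
  · simp only [Fin.insertNth_apply_succAbove]; have := hg j; omega
  · simp
  · simpa using hg1 j

theorem treedepth_pathGraph_two_pow (K : ℕ) : treedepth (pathGraph (2 ^ K)) = K + 1 := by
  obtain ⟨f, hf, -⟩ :=
    exists_isRanking_pathGraph_eq_one_iff le_rfl (⟨0, by positivity⟩ : Fin (2 ^ K))
  refine le_antisymm (Nat.sInf_le ⟨f, hf⟩) (le_csInf ⟨_, f, hf⟩ ?_)
  rintro m ⟨g, hg⟩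
  by_contra! hm
  exact not_isRanking_pathGraph_two_pow K g (hg.of_forall_le fun v => by have := (hg.1 v).2; omega)

/-- For every `k ≥ 1`, the path `P_{2^{k-1}}` has tree-depth `k`, and every vertex is
the unique vertex with label 1 in some `k`-ranking. -/
theorem pathGraph_treedepth_and_oneUnique (k : ℕ) (hk : 1 ≤ k) :
    treedepth (SimpleGraph.pathGraph (2 ^ (k - 1))) = k ∧
    ∀ v : Fin (2 ^ (k - 1)), ∃ f : Fin (2 ^ (k - 1)) → ℕ,
      IsRanking (SimpleGraph.pathGraph (2 ^ (k - 1))) k f ∧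
      f v = 1 ∧ ∀ w, f w = 1 → w = v := by
  obtain ⟨K, rfl⟩ : ∃ K, k = K + 1 := ⟨k - 1, by omega⟩
  rw [Nat.add_sub_cancel]
  refine ⟨treedepth_pathGraph_two_pow K, fun v => ?_⟩
  obtain ⟨f, hf, hone⟩ := exists_isRanking_pathGraph_eq_one_iff le_rfl v
  exact ⟨f, hf, (hone v).2 rfl, fun w => (hone w).1⟩
end

section
/- Let G be a finite simple graph. Then td(G) equals the minimum, over all subsets S of V(G), of td(G⟨S⟩) + td(G − S). -/
/-- The graph `G⟨S⟩` on vertex set `S`: distinct `u, v ∈ S` are adjacent iff they are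
adjacent in `G`, or some connected component of `G − S` contains a vertex adjacent in
`G` to `u` and a vertex adjacent in `G` to `v`. -/
def closureOn {V : Type*} (G : SimpleGraph V) (S : Set V) : SimpleGraph S where
  Adj u w := u ≠ w ∧ (G.Adj u.1 w.1 ∨
    ∃ a b : ↥(Sᶜ : Set V), G.Adj a.1 u.1 ∧ G.Adj b.1 w.1 ∧
      (G.induce (Sᶜ : Set V)).Reachable a b)
  symm := by
    constructor
    rintro u w ⟨hne, h | ⟨a, b, h1, h2, h3⟩⟩
    · exact ⟨hne.symm, Or.inl h.symm⟩
    · exact ⟨hne.symm, Or.inr ⟨b, a, h2, h1, h3.symm⟩⟩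
  loopless := ⟨fun u h => h.1 rfl⟩

/-! Given rankings of `G⟨S⟩` and of `G − S`, shift the first above the second. Two equally
labelled vertices of `S` joined by a path of `G` are joined by a walk of `G⟨S⟩` through the
vertices of that path in `S`, since every excursion of the path into `G − S` is an edge of `G⟨S⟩`.
Two equally labelled vertices outside `S` joined by a path either see a (higher) label from `S`
on it, or the path lies in `G − S`. Conversely `S = V` gives `G⟨V⟩ = G` and an empty `G − V`. -/

open SimpleGraph

section

variable {V W : Type*}

lemma exists_isRanking_natCard [Finite V] (G : SimpleGraph V) :
    ∃ f, IsRanking G (Nat.card V) f := by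
  let e := Finite.equivFin V
  refine ⟨fun v => e v + 1, fun v => ⟨le_add_self, (e v).isLt⟩, ?_⟩
  intro u v _ _ huv hf
  exact absurd (e.injective (Fin.ext (Nat.add_right_cancel hf))) huv

lemma exists_isRanking_treedepth [Finite V] (G : SimpleGraph V) :
    ∃ f, IsRanking G (treedepth G) f :=
  Nat.sInf_mem (s := {k | ∃ f, IsRanking G k f}) ⟨_, exists_isRanking_natCard G⟩

lemma treedepth_eq_zero_of_isEmpty [IsEmpty V] (G : SimpleGraph V) : treedepth G = 0 :=
  Nat.sInf_eq_zero.2 (.inl ⟨fun _ => 1, isEmptyElim, fun u => isEmptyElim u⟩)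

namespace IsRanking

variable {G : SimpleGraph V} {k : ℕ} {f : V → ℕ}

lemma exists_lt_of_walk_s8 (hf : IsRanking G k f) {u v : V} (p : G.Walk u v) (huv : u ≠ v)
    (hfuv : f u = f v) : ∃ w ∈ p.support, f u < f w := by
  classical
  obtain ⟨w, hw, hlt⟩ := hf.2 p.bypass p.bypass_isPath huv hfuv
  exact ⟨w, p.support_bypass_subset_support hw, hlt⟩

lemma comp_hom {G' : SimpleGraph W} {f : W → ℕ} (hf : IsRanking G' k f) (φ : G →g G')
    (hφ : Function.Injective φ) : IsRanking G k (f ∘ φ) := by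
  refine ⟨fun v => hf.1 (φ v), fun u v p _ huv hfuv => ?_⟩
  obtain ⟨w, hw, hlt⟩ := hf.exists_lt_of_walk_s8 (p.map φ) (hφ.ne huv) hfuv
  rw [Walk.support_map, List.mem_map] at hw
  obtain ⟨w, hw, rfl⟩ := hw
  exact ⟨w, hw, hlt⟩

end IsRanking

lemma treedepth_le_of_injective [Finite W] {G : SimpleGraph V} {G' : SimpleGraph W}
    (φ : G →g G') (hφ : Function.Injective φ) : treedepth G ≤ treedepth G' :=
  let ⟨_, hf⟩ := exists_isRanking_treedepth G'
  Nat.sInf_le ⟨_, hf.comp_hom φ hφ⟩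

section closureOn

variable (G : SimpleGraph V) {S : Set V}

/- The hypothesis on `x` records the excursion of the walk into `G − S` in progress, which
started from `u`: its end `y ∈ S` makes `u, y` adjacent in `G⟨S⟩`. -/
private lemma exists_closureOn_walk_aux {u : V} (hu : u ∈ S) :
    ∀ {x v : V} (p : G.Walk x v) (hv : v ∈ S),
      (x = u ∨ ∃ a b : ↥Sᶜ, G.Adj a u ∧ (G.induce Sᶜ).Reachable a b ∧ b.1 = x) →
      ∃ q : (closureOn G S).Walk ⟨u, hu⟩ ⟨v, hv⟩, ∀ w ∈ q.support, w.1 = u ∨ w.1 ∈ p.support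
  | _, _, .nil, _, .inl rfl => ⟨.nil, by simp⟩
  | _, _, .nil, hv, .inr ⟨_, b, _, _, hb⟩ => by subst hb; exact absurd hv b.2
  | x, v, .cons (v := y) hxy p, hv, hx => by
    by_cases hy : y ∈ S
    · obtain ⟨q, hq⟩ := exists_closureOn_walk_aux hy p hv (.inl rfl)
      by_cases huy : u = y
      · subst huy
        exact ⟨q, fun w hw => (hq w hw).imp id (by simp +contextual)⟩
      have hadj : (closureOn G S).Adj ⟨u, hu⟩ ⟨y, hy⟩ := by
        refine ⟨fun h => huy (congrArg Subtype.val h), ?_⟩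
        rcases hx with rfl | ⟨a, b, hau, hab, rfl⟩
        · exact .inl hxy
        · exact .inr ⟨a, b, hau, hxy, hab⟩
      refine ⟨.cons hadj q, fun w hw => ?_⟩
      rcases List.mem_cons.1 hw with rfl | hw
      · exact .inl rfl
      · rcases hq w hw with h | h <;> simp [h, p.start_mem_support]
    · have hy' : ∃ a b : ↥Sᶜ, G.Adj a u ∧ (G.induce Sᶜ).Reachable a b ∧ b.1 = y := by
        rcases hx with rfl | ⟨a, b, hau, hab, rfl⟩
        · exact ⟨⟨y, hy⟩, ⟨y, hy⟩, hxy.symm, .rfl, rfl⟩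
        · exact ⟨a, ⟨y, hy⟩, hau, hab.trans (Adj.reachable (by exact hxy)), rfl⟩
      obtain ⟨q, hq⟩ := exists_closureOn_walk_aux hu p hv (.inr hy')
      exact ⟨q, fun w hw => (hq w hw).imp id (by simp +contextual)⟩

lemma exists_closureOn_walk {u v : V} (p : G.Walk u v) (hu : u ∈ S) (hv : v ∈ S) :
    ∃ q : (closureOn G S).Walk ⟨u, hu⟩ ⟨v, hv⟩, ∀ w ∈ q.support, w.1 ∈ p.support :=
  let ⟨q, hq⟩ := exists_closureOn_walk_aux G hu p hv (.inl rfl)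
  ⟨q, fun w hw => (hq w hw).elim (fun h => h ▸ p.start_mem_support) id⟩

end closureOn

section stackLabels

variable {G : SimpleGraph V} {S : Set V} {k₁ k₂ : ℕ} {f₁ : S → ℕ} {f₂ : ↥Sᶜ → ℕ} {v : V}

open Classical in
noncomputable def stackLabels (S : Set V) (f₁ : S → ℕ) (k₂ : ℕ) (f₂ : ↥Sᶜ → ℕ) (v : V) : ℕ :=
  if hv : v ∈ S then f₁ ⟨v, hv⟩ + k₂ else f₂ ⟨v, hv⟩

lemma stackLabels_of_mem (hv : v ∈ S) : stackLabels S f₁ k₂ f₂ v = f₁ ⟨v, hv⟩ + k₂ :=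
  dif_pos hv

lemma stackLabels_of_notMem (hv : v ∉ S) : stackLabels S f₁ k₂ f₂ v = f₂ ⟨v, hv⟩ :=
  dif_neg hv

lemma isRanking_stackLabels (h₁ : IsRanking (closureOn G S) k₁ f₁)
    (h₂ : IsRanking (G.induce Sᶜ) k₂ f₂) : IsRanking G (k₁ + k₂) (stackLabels S f₁ k₂ f₂) := by
  have low : ∀ v (hv : v ∉ S),
      1 ≤ stackLabels S f₁ k₂ f₂ v ∧ stackLabels S f₁ k₂ f₂ v ≤ k₂ := fun v hv => by
    rw [stackLabels_of_notMem hv]; exact h₂.1 _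
  have high : ∀ v (hv : v ∈ S),
      k₂ < stackLabels S f₁ k₂ f₂ v ∧ stackLabels S f₁ k₂ f₂ v ≤ k₁ + k₂ := fun v hv => by
    have := h₁.1 ⟨v, hv⟩
    rw [stackLabels_of_mem hv]; omega
  refine ⟨fun v => ?_, fun u v p _ huv hfuv => ?_⟩
  · by_cases hv : v ∈ S
    · have := high v hv; omega
    · have := low v hv; omega
  by_cases hu : u ∈ S <;> by_cases hv : v ∈ S
  · obtain ⟨q, hq⟩ := exists_closureOn_walk G p hu hv
    have hf₁ : f₁ ⟨u, hu⟩ = f₁ ⟨v, hv⟩ := by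
      rw [stackLabels_of_mem hu, stackLabels_of_mem hv] at hfuv; omega
    obtain ⟨w, hw, hlt⟩ := h₁.exists_lt_of_walk_s8 q (fun h => huv (congrArg Subtype.val h)) hf₁
    refine ⟨w, hq w hw, ?_⟩
    rw [stackLabels_of_mem hu, stackLabels_of_mem w.2]
    exact Nat.add_lt_add_right hlt k₂
  · have := high u hu; have := low v hv; omega
  · have := low u hu; have := high v hv; omega
  by_cases hp : ∀ w ∈ p.support, w ∈ Sᶜ
  · have hf₂ : f₂ ⟨u, hu⟩ = f₂ ⟨v, hv⟩ := by
      rwa [stackLabels_of_notMem hu, stackLabels_of_notMem hv] at hfuv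
    obtain ⟨w, hw, hlt⟩ :=
      h₂.exists_lt_of_walk_s8 (p.induce Sᶜ hp) (fun h => huv (congrArg Subtype.val h)) hf₂
    refine ⟨w, by simpa using hw, ?_⟩
    rwa [stackLabels_of_notMem hu, stackLabels_of_notMem w.2]
  · obtain ⟨w, hw, hwS⟩ := not_forall₂.1 hp
    exact ⟨w, hw, (low u hu).2.trans_lt (high w (by simpa using hwS)).1⟩

end stackLabels

lemma treedepth_le_treedepth_closureOn_add [Finite V] (G : SimpleGraph V) (S : Set V) :
    treedepth G ≤ treedepth (closureOn G S) + treedepth (G.induce Sᶜ) :=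
  let ⟨_, h₁⟩ := exists_isRanking_treedepth (closureOn G S)
  let ⟨_, h₂⟩ := exists_isRanking_treedepth (G.induce Sᶜ)
  Nat.sInf_le ⟨_, isRanking_stackLabels h₁ h₂⟩

lemma treedepth_closureOn_univ_le [Finite V] (G : SimpleGraph V) :
    treedepth (closureOn G Set.univ) ≤ treedepth G :=
  treedepth_le_of_injective
    ⟨Subtype.val, fun h => h.2.resolve_right fun ⟨a, _⟩ => a.2 (Set.mem_univ _)⟩
    Subtype.val_injective

end

/-- `td(G)` equals the minimum over all `S ⊆ V(G)` of `td(G⟨S⟩) + td(G − S)`. -/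
theorem treedepth_eq_iInf_closureOn {V : Type*} [Fintype V] (G : SimpleGraph V) :
    treedepth G =
      ⨅ S : Set V, (treedepth (closureOn G S) + treedepth (G.induce (Sᶜ : Set V))) := by
  have : IsEmpty ↥(Set.univ : Set V)ᶜ := ⟨fun a => a.2 (Set.mem_univ _)⟩
  refine le_antisymm (le_ciInf (treedepth_le_treedepth_closureOn_add G)) ?_
  calc ⨅ S : Set V, (treedepth (closureOn G S) + treedepth (G.induce (Sᶜ : Set V)))
      ≤ treedepth (closureOn G Set.univ) + treedepth (G.induce (Set.univᶜ : Set V)) :=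
        ciInf_le (OrderBot.bddBelow _) _
    _ = treedepth (closureOn G Set.univ) := by
        rw [treedepth_eq_zero_of_isEmpty (G.induce _), add_zero]
    _ ≤ treedepth G := treedepth_closureOn_univ_le G
end

section
/- For all integers k ≥ 3 and t with 0 ≤ t ≤ 2^{k−2} − 2, and for every vertex x of R_{k,t}, there exists a k-ranking of R_{k,t} in which x is the unique vertex with label 1. -/
/-- Labels for a path of `2^q - 1` vertices (offsets `1..2^q-1`), values in `[2, q+1]`. -/
def noL : ℕ → ℕ → ℕ
  | 0, _ => 2
  | q+1, d => if d = 2^q then q+2 else if d < 2^q then noL q d else noL q (d - 2^q)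

lemma noL_lb (q d : ℕ) : 2 ≤ noL q d := by
  induction q generalizing d with
  | zero => simp [noL]
  | succ q ih =>
    simp only [noL]
    split
    · omega
    · split
      · exact ih d
      · exact ih (d - 2^q)

lemma noL_ub (q : ℕ) : ∀ d, 1 ≤ d → d < 2^q → noL q d ≤ q + 1 := by
  induction q with
  | zero => intro d h1 h2; omega
  | succ q ih =>
    intro d h1 h2
    have h2q : (2:ℕ)^(q+1) = 2^q + 2^q := by rw [pow_succ]; ring
    simp only [noL]
    split
    · omega
    · split
      · exact (ih d h1 (by assumption)).trans (by omega)
      · exact (ih (d - 2^q) (by omega) (by omega)).trans (by omega)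

lemma noL_rank (q : ℕ) : ∀ d1 d2, 1 ≤ d1 → d1 < d2 → d2 < 2^q →
    noL q d1 = noL q d2 → ∃ m, d1 < m ∧ m < d2 ∧ noL q d1 < noL q m := by
  induction q with
  | zero => intro d1 d2 h1 h12 h2; omega
  | succ q ih =>
    intro d1 d2 h1 h12 h2 he
    have h2q : (2:ℕ)^(q+1) = 2^q + 2^q := by rw [pow_succ]; ring
    have hq1 : (1:ℕ) ≤ 2^q := Nat.one_le_two_pow
    rcases lt_trichotomy d2 (2^q) with hd2 | hd2 | hd2
    · -- both below
      have e1 : noL (q+1) d1 = noL q d1 := by simp only [noL]; rw [if_neg (by omega), if_pos (by omega)]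
      have e2 : noL (q+1) d2 = noL q d2 := by simp only [noL]; rw [if_neg (by omega), if_pos (by omega)]
      obtain ⟨m, hm1, hm2, hm3⟩ := ih d1 d2 h1 h12 hd2 (by rw [e1, e2] at he; exact he)
      refine ⟨m, hm1, hm2, ?_⟩
      have em : noL (q+1) m = noL q m := by simp only [noL]; rw [if_neg (by omega), if_pos (by omega)]
      rw [e1, em]; exact hm3
    · -- d2 = 2^q : value q+2 vs d1 ≤ q+1
      have e2 : noL (q+1) d2 = q + 2 := by simp only [noL]; rw [if_pos hd2]
      have e1 : noL (q+1) d1 = noL q d1 := by simp only [noL]; rw [if_neg (by omega), if_pos (by omega)]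
      have := noL_ub q d1 h1 (by omega)
      omega
    · rcases lt_trichotomy d1 (2^q) with hd1 | hd1 | hd1
      · -- straddle: m := 2^q
        refine ⟨2^q, hd1, hd2, ?_⟩
        have e1 : noL (q+1) d1 = noL q d1 := by simp only [noL]; rw [if_neg (by omega), if_pos (by omega)]
        have em : noL (q+1) (2^q) = q + 2 := by simp [noL]
        have := noL_ub q d1 h1 hd1
        omega
      · -- d1 = 2^q
        have e1 : noL (q+1) d1 = q + 2 := by simp only [noL]; rw [if_pos hd1]
        have e2 : noL (q+1) d2 = noL q (d2 - 2^q) := by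
          simp only [noL]; rw [if_neg (by omega), if_neg (by omega)]
        have := noL_ub q (d2 - 2^q) (by omega) (by omega)
        omega
      · -- both above
        have e1 : noL (q+1) d1 = noL q (d1 - 2^q) := by
          simp only [noL]; rw [if_neg (by omega), if_neg (by omega)]
        have e2 : noL (q+1) d2 = noL q (d2 - 2^q) := by
          simp only [noL]; rw [if_neg (by omega), if_neg (by omega)]
        obtain ⟨m, hm1, hm2, hm3⟩ := ih (d1 - 2^q) (d2 - 2^q) (by omega) (by omega) (by omega)
          (by rw [e1, e2] at he; exact he)
        refine ⟨m + 2^q, by omega, by omega, ?_⟩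
        have em : noL (q+1) (m + 2^q) = noL q m := by
          simp only [noL]; rw [if_neg (by omega), if_neg (by omega)]
          congr 1; omega
        rw [e1, em]; exact hm3

/-- Labels for a path of `2^q` vertices (positions `0..2^q-1`), values in `[1, q+1]`,
with the unique label `1` at position `j`. -/
def u1 : ℕ → ℕ → ℕ → ℕ
  | 0, _, _ => 1
  | q+1, j, i =>
    if j < 2^q then
      (if i < 2^q then u1 q j i else if i = 2^q then q+2 else noL q (i - 2^q))
    else
      (if 2^q ≤ i then u1 q (j - 2^q) (i - 2^q) else if i = 2^q - 1 then q+2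
       else noL q (2^q - 1 - i))

lemma u1_lb (q j i : ℕ) : 1 ≤ u1 q j i := by
  induction q generalizing j i with
  | zero => simp [u1]
  | succ q ih =>
    simp only [u1]
    have := noL_lb q (i - 2^q)
    have := noL_lb q (2^q - 1 - i)
    split <;> split
    · exact ih j i
    · split <;> omega
    · exact ih (j - 2^q) (i - 2^q)
    · split <;> omega

lemma u1_ub (q : ℕ) : ∀ j i, i < 2^q → u1 q j i ≤ q + 1 := by
  induction q with
  | zero => intro j i h; simp [u1]
  | succ q ih =>
    intro j i h
    have h2q : (2:ℕ)^(q+1) = 2^q + 2^q := by rw [pow_succ]; ring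
    have hq1 : (1:ℕ) ≤ 2^q := Nat.one_le_two_pow
    simp only [u1]
    split
    · split
      · exact (ih j i (by assumption)).trans (by omega)
      · split
        · omega
        · exact (noL_ub q (i - 2^q) (by omega) (by omega)).trans (by omega)
    · split
      · exact (ih (j - 2^q) (i - 2^q) (by omega)).trans (by omega)
      · split
        · omega
        · exact (noL_ub q (2^q - 1 - i) (by omega) (by omega)).trans (by omega)

lemma u1_one (q : ℕ) : ∀ j i, j < 2^q → i < 2^q → (u1 q j i = 1 ↔ i = j) := by
  induction q with
  | zero => intro j i hj hi; simp [u1]; omega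
  | succ q ih =>
    intro j i hj hi
    have h2q : (2:ℕ)^(q+1) = 2^q + 2^q := by rw [pow_succ]; ring
    have hq1 : (1:ℕ) ≤ 2^q := Nat.one_le_two_pow
    have hnoL1 := noL_lb q (i - 2^q)
    have hnoL2 := noL_lb q (2^q - 1 - i)
    simp only [u1]
    split
    · split
      · exact ih j i (by omega) (by omega)
      · split <;> omega
    · split
      · rw [ih (j - 2^q) (i - 2^q) (by omega) (by omega)]; omega
      · split <;> omega

lemma u1_rank (q : ℕ) : ∀ j i1 i2, i1 < i2 → i2 < 2^q → u1 q j i1 = u1 q j i2 →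
    ∃ m, i1 < m ∧ m < i2 ∧ u1 q j i1 < u1 q j m := by
  induction q with
  | zero => intro j i1 i2 h12 h2; omega
  | succ q ih =>
    intro j i1 i2 h12 h2 he
    have h2q : (2:ℕ)^(q+1) = 2^q + 2^q := by rw [pow_succ]; ring
    have hq1 : (1:ℕ) ≤ 2^q := Nat.one_le_two_pow
    by_cases hj : j < 2^q
    · -- pivot at 2^q
      have eA : ∀ i, i < 2^q → u1 (q+1) j i = u1 q j i := by
        intro i hi; simp only [u1]; rw [if_pos hj, if_pos hi]
      have eP : u1 (q+1) j (2^q) = q + 2 := by simp [u1, hj]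
      have eB : ∀ i, 2^q < i → u1 (q+1) j i = noL q (i - 2^q) := by
        intro i hi; simp only [u1]; rw [if_pos hj, if_neg (by omega), if_neg (by omega)]
      rcases lt_trichotomy i2 (2^q) with hd2 | hd2 | hd2
      · obtain ⟨m, hm1, hm2, hm3⟩ := ih j i1 i2 h12 hd2
          (by rw [eA i1 (by omega), eA i2 (by omega)] at he; exact he)
        exact ⟨m, hm1, hm2, by rw [eA i1 (by omega), eA m (by omega)]; exact hm3⟩
      · have := u1_ub q j i1 (by omega)
        rw [eA i1 (by omega), hd2, eP] at he; omega
      · rcases lt_trichotomy i1 (2^q) with hd1 | hd1 | hd1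
        · refine ⟨2^q, hd1, hd2, ?_⟩
          have := u1_ub q j i1 (by omega)
          rw [eA i1 (by omega), eP]; omega
        · have := noL_ub q (i2 - 2^q) (by omega) (by omega)
          rw [hd1] at he ⊢; rw [eP, eB i2 (by omega)] at he; omega
        · obtain ⟨m, hm1, hm2, hm3⟩ := noL_rank q (i1 - 2^q) (i2 - 2^q) (by omega) (by omega)
            (by omega) (by rw [eB i1 hd1, eB i2 (by omega)] at he; exact he)
          refine ⟨m + 2^q, by omega, by omega, ?_⟩
          rw [eB i1 hd1, eB (m + 2^q) (by omega)]
          simpa using hm3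
    · -- pivot at 2^q - 1
      have eA : ∀ i, 2^q ≤ i → u1 (q+1) j i = u1 q (j - 2^q) (i - 2^q) := by
        intro i hi; simp only [u1]; rw [if_neg hj, if_pos hi]
      have eP : u1 (q+1) j (2^q - 1) = q + 2 := by
        simp only [u1]; rw [if_neg hj, if_neg (by omega)]; simp
      have eB : ∀ i, i < 2^q - 1 → u1 (q+1) j i = noL q (2^q - 1 - i) := by
        intro i hi; simp only [u1]; rw [if_neg hj, if_neg (by omega), if_neg (by omega)]
      rcases lt_trichotomy i1 (2^q - 1) with hd1 | hd1 | hd1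
      · rcases lt_trichotomy i2 (2^q - 1) with hd2 | hd2 | hd2
        · rw [eB i1 hd1, eB i2 hd2] at he
          obtain ⟨m, hm1, hm2, hm3⟩ := noL_rank q (2^q - 1 - i2) (2^q - 1 - i1) (by omega)
            (by omega) (by omega) he.symm
          refine ⟨2^q - 1 - m, by omega, by omega, ?_⟩
          rw [eB i1 hd1, eB (2^q - 1 - m) (by omega)]
          have hm' : 2^q - 1 - (2^q - 1 - m) = m := by omega
          rw [hm']
          omega
        · subst hd2
          have := noL_ub q (2^q - 1 - i1) (by omega) (by omega)
          rw [eB i1 hd1, eP] at he; omega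
        · refine ⟨2^q - 1, hd1, hd2, ?_⟩
          have := noL_ub q (2^q - 1 - i1) (by omega) (by omega)
          rw [eB i1 hd1, eP]; omega
      · subst hd1
        have := u1_ub q (j - 2^q) (i2 - 2^q) (by omega)
        rw [eP, eA i2 (by omega)] at he
        omega
      · obtain ⟨m, hm1, hm2, hm3⟩ := ih (j - 2^q) (i1 - 2^q) (i2 - 2^q) (by omega) (by omega)
          (by rw [eA i1 (by omega), eA i2 (by omega)] at he; exact he)
        refine ⟨m + 2^q, by omega, by omega, ?_⟩
        rw [eA i1 (by omega), eA (m + 2^q) (by omega)]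
        simpa using hm3




/-- The graph `R_{k,t}`: a path `v_1, …, v_{2^{k-2}+1+t}` (vertex `v_i` is index `i - 1`
in `Fin (2^(k-2)+1+t)`) together with an added edge between `v_{t+1}` (index `t`) and
`v_{2^{k-2}+1}` (index `2^(k-2)`). -/
def Rgraph (k t : ℕ) : SimpleGraph (Fin (2 ^ (k - 2) + 1 + t)) :=
  SimpleGraph.fromRel (fun i j =>
    i.val + 1 = j.val ∨ (i.val = t ∧ j.val = 2 ^ (k - 2)))


lemma Rgraph_ivt (k t r : ℕ) (hr : r = t ∨ r = 2^(k-2)) {u v : Fin (2^(k-2)+1+t)}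
    (p : (Rgraph k t).Walk u v) :
    (∀ w ∈ p.support, w.val ≠ r) → ∀ c, min u.val v.val ≤ c → c ≤ max u.val v.val →
      ∃ w ∈ p.support, w.val = c := by
  induction p with
  | nil =>
    rename_i w
    intro _ c hc1 hc2
    simp only [min_self] at hc1
    simp only [max_self] at hc2
    exact ⟨w, by simp, by omega⟩
  | @cons a b v' hadj p ih =>
    intro havoid c hc1 hc2
    have ha : a.val ≠ r := havoid a (by simp)
    have hb : b.val ≠ r := havoid b (by simp [SimpleGraph.Walk.start_mem_support])
    have hadj' : a ≠ b ∧ ((a.val + 1 = b.val ∨ (a.val = t ∧ b.val = 2^(k-2))) ∨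
        (b.val + 1 = a.val ∨ (b.val = t ∧ a.val = 2^(k-2)))) := by
      simpa [Rgraph, SimpleGraph.fromRel_adj] using hadj
    have hstep : a.val + 1 = b.val ∨ b.val + 1 = a.val := by
      rcases hr with hr | hr <;> rcases hadj'.2 with (h | h) | (h | h) <;> omega
    by_cases hc : c = a.val
    · exact ⟨a, by simp, hc.symm⟩
    · obtain ⟨w, hw1, hw2⟩ := ih (fun w hw => havoid w (by simp [hw])) c
        (by omega) (by omega)
      exact ⟨w, by simp [hw1], hw2⟩

lemma master (k t : ℕ) (F : ℕ → ℕ) (r : ℕ) (hrn : r < 2^(k-2)+1+t)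
    (hr : r = t ∨ r = 2^(k-2)) (hFr : F r = k)
    (hbd : ∀ i, i < 2^(k-2)+1+t → 1 ≤ F i ∧ F i ≤ k)
    (hrank : ∀ i1 i2, i1 < i2 → i2 < 2^(k-2)+1+t → F i1 = F i2 →
      ∃ m, i1 < m ∧ m < i2 ∧ F i1 < F m) :
    IsRanking (Rgraph k t) k (fun v => F v.val) := by
  constructor
  · intro v; exact hbd v.val v.isLt
  · intro u v p hp huv hfuv
    simp only at hfuv
    have hne : u.val ≠ v.val := fun h => huv (Fin.ext h)
    -- get a larger label strictly between u.val and v.val on the line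
    obtain ⟨m, hm1, hm2, hm3⟩ :
        ∃ m, min u.val v.val < m ∧ m < max u.val v.val ∧ F u.val < F m := by
      rcases Nat.lt_or_ge u.val v.val with h | h
      · obtain ⟨m, h1, h2, h3⟩ := hrank u.val v.val h v.isLt hfuv
        exact ⟨m, by omega, by omega, h3⟩
      · obtain ⟨m, h1, h2, h3⟩ := hrank v.val u.val (by omega) u.isLt hfuv.symm
        exact ⟨m, by omega, by omega, by rw [hfuv]; exact h3⟩
    have hfuk : F u.val < k := lt_of_lt_of_le hm3 (hbd m (by omega)).2
    by_cases hrs : (⟨r, hrn⟩ : Fin (2^(k-2)+1+t)) ∈ p.support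
    · exact ⟨_, hrs, by simpa [hFr] using hfuk⟩
    · have havoid : ∀ w ∈ p.support, w.val ≠ r := by
        intro w hw hwr
        exact hrs (by rwa [show (⟨r, hrn⟩ : Fin (2^(k-2)+1+t)) = w from (Fin.ext hwr.symm)])
      obtain ⟨w, hw1, hw2⟩ := Rgraph_ivt k t r hr p havoid m (by omega) (by omega)
      exact ⟨w, hw1, by simpa [hw2] using hm3⟩
/-- Labels for case where the special vertex lies right of the chord endpoint `t`. -/
def FB (q t j i : ℕ) : ℕ :=
  if i < t then noL q (t - i) else if i = t then q + 2 else u1 q j (i - t - 1)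

lemma FB_left (q t j i : ℕ) (h : i < t) : FB q t j i = noL q (t - i) := by
  simp [FB, h]

lemma FB_mid (q t j : ℕ) : FB q t j t = q + 2 := by simp [FB]

lemma FB_right (q t j i : ℕ) (h : t < i) : FB q t j i = u1 q j (i - t - 1) := by
  rw [FB, if_neg (by omega), if_neg (by omega)]

lemma FB_lb (q t j i : ℕ) : 1 ≤ FB q t j i := by
  rw [FB]
  have := noL_lb q (t - i)
  have := u1_lb q j (i - t - 1)
  split
  · omega
  · split <;> omega

lemma FB_ub (q t j : ℕ) (ht : t + 2 ≤ 2^q) :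
    ∀ i, i < 2^q + 1 + t → FB q t j i ≤ q + 2 := by
  intro i hi
  rcases lt_trichotomy i t with h | h | h
  · rw [FB_left q t j i h]
    exact (noL_ub q (t - i) (by omega) (by omega)).trans (by omega)
  · rw [h, FB_mid]
  · rw [FB_right q t j i h]
    exact (u1_ub q j (i - t - 1) (by omega)).trans (by omega)

lemma FB_rank (q t j : ℕ) (ht : t + 2 ≤ 2^q) :
    ∀ i1 i2, i1 < i2 → i2 < 2^q + 1 + t → FB q t j i1 = FB q t j i2 →
    ∃ m, i1 < m ∧ m < i2 ∧ FB q t j i1 < FB q t j m := by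
  intro i1 i2 h12 h2 he
  rcases lt_trichotomy i2 t with hd2 | hd2 | hd2
  · -- both left of t
    rw [FB_left q t j i1 (by omega), FB_left q t j i2 hd2] at he
    obtain ⟨m, hm1, hm2, hm3⟩ := noL_rank q (t - i2) (t - i1) (by omega) (by omega)
      (by omega) he.symm
    refine ⟨t - m, by omega, by omega, ?_⟩
    rw [FB_left q t j i1 (by omega), FB_left q t j (t - m) (by omega)]
    have hm' : t - (t - m) = m := by omega
    rw [hm']
    omega
  · -- i2 = t
    rw [FB_left q t j i1 (by omega), hd2, FB_mid] at he
    have := noL_ub q (t - i1) (by omega) (by omega)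
    omega
  · rcases lt_trichotomy i1 t with hd1 | hd1 | hd1
    · -- straddle
      refine ⟨t, hd1, hd2, ?_⟩
      rw [FB_left q t j i1 hd1, FB_mid]
      have := noL_ub q (t - i1) (by omega) (by omega)
      omega
    · -- i1 = t
      rw [hd1, FB_mid, FB_right q t j i2 hd2] at he
      have := u1_ub q j (i2 - t - 1) (by omega)
      omega
    · -- both right of t
      rw [FB_right q t j i1 hd1, FB_right q t j i2 (by omega)] at he
      obtain ⟨m, hm1, hm2, hm3⟩ := u1_rank q j (i1 - t - 1) (i2 - t - 1) (by omega)
        (by omega) he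
      refine ⟨m + t + 1, by omega, by omega, ?_⟩
      rw [FB_right q t j i1 hd1, FB_right q t j (m + t + 1) (by omega)]
      have hm' : m + t + 1 - t - 1 = m := by omega
      rw [hm']
      exact hm3

lemma FB_one (q t j : ℕ) (hj : j < 2^q) (ht : t + 2 ≤ 2^q) :
    ∀ i, i < 2^q + 1 + t → (FB q t j i = 1 ↔ i = t + 1 + j) := by
  intro i hi
  rcases lt_trichotomy i t with h | h | h
  · rw [FB_left q t j i h]
    have := noL_lb q (t - i)
    constructor <;> omega
  · subst h
    rw [FB_mid]
    constructor <;> omega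
  · rw [FB_right q t j i h]
    rw [u1_one q j (i - t - 1) hj (by omega)]
    constructor <;> omega
/-- For `k ≥ 3` and `0 ≤ t ≤ 2^(k-2) − 2`, every vertex of `R_{k,t}` is the unique
vertex with label 1 in some `k`-ranking of `R_{k,t}`. -/
theorem Rgraph_oneUnique (k t : ℕ) (hk : 3 ≤ k) (ht : t ≤ 2 ^ (k - 2) - 2)
    (x : Fin (2 ^ (k - 2) + 1 + t)) :
    ∃ f : Fin (2 ^ (k - 2) + 1 + t) → ℕ,
      IsRanking (Rgraph k t) k f ∧ f x = 1 ∧ ∀ w, f w = 1 → w = x := by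
  obtain ⟨q, rfl⟩ : ∃ q, k = q + 3 := ⟨k - 3, by omega⟩
  have h2q : (2:ℕ)^(q+2) = 2^(q+1) + 2^(q+1) := by rw [pow_succ]; ring
  have hq1 : (1:ℕ) ≤ 2^(q+1) := Nat.one_le_two_pow
  have hq2 : (2:ℕ) ≤ 2^(q+1) := by
    calc (2:ℕ) = 2^1 := rfl
    _ ≤ 2^(q+1) := Nat.pow_le_pow_right (by norm_num) (by omega)
  have ht' : t ≤ 2^(q+1) - 2 := ht
  have hx : x.val < 2^(q+1) + 1 + t := x.isLt
  by_cases hA : x.val < 2^(q+1)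
  · -- place the top label k at index 2^(q+1)
    refine ⟨fun v => u1 (q+2) x.val v.val, ?_, ?_, ?_⟩
    · apply master (q+3) t (u1 (q+2) x.val) (2^(q+1))
        (show (2:ℕ)^(q+1) < 2^(q+1)+1+t by omega) (Or.inr rfl)
      · show u1 (q+2) x.val (2^(q+1)) = q + 3
        simp only [u1]
        rw [if_pos hA, if_neg (by omega)]
        simp
      · intro i hi
        have hi' : i < 2^(q+1)+1+t := hi
        exact ⟨u1_lb (q+2) x.val i, u1_ub (q+2) x.val i (by omega)⟩
      · intro i1 i2 h12 h2 he
        have h2' : i2 < 2^(q+1)+1+t := h2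
        exact u1_rank (q+2) x.val i1 i2 h12 (by omega) he
    · exact (u1_one (q+2) x.val x.val (by omega) (by omega)).mpr rfl
    · intro w hw
      have hwlt : w.val < 2^(q+1)+1+t := w.isLt
      exact Fin.ext ((u1_one (q+2) x.val w.val (by omega) (by omega)).mp hw)
  · -- place the top label k at index t
    have hxt : t < x.val := by omega
    set j := x.val - t - 1 with hj
    have hjlt : j < 2^(q+1) := by omega
    have ht2 : t + 2 ≤ 2^(q+1) := by omega
    refine ⟨fun v => FB (q+1) t j v.val, ?_, ?_, ?_⟩
    · apply master (q+3) t (FB (q+1) t j) t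
        (show t < 2^(q+1)+1+t by omega) (Or.inl rfl)
      · show FB (q+1) t j t = q + 3
        rw [FB_mid]
      · intro i hi
        have hi' : i < 2^(q+1)+1+t := hi
        exact ⟨FB_lb (q+1) t j i, FB_ub (q+1) t j ht2 i hi'⟩
      · intro i1 i2 h12 h2 he
        have h2' : i2 < 2^(q+1)+1+t := h2
        exact FB_rank (q+1) t j ht2 i1 i2 h12 h2' he
    · exact (FB_one (q+1) t j hjlt ht2 x.val hx).mpr (by omega)
    · intro w hw
      have hwlt : w.val < 2^(q+1)+1+t := w.isLt
      have := (FB_one (q+1) t j hjlt ht2 w.val hwlt).mp hw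
      exact Fin.ext (by omega)
end

section
/- For all integers k ≥ 3 and t with 0 ≤ t ≤ 2^{k−2} − 2, and for every edge e of R_{k,t}, the graph R_{k,t} − e obtained by deleting the edge e has tree-depth strictly less than k. -/
-- aux
instance : Fact (Nat.Prime 2) := ⟨Nat.prime_two⟩

lemma padic_lt_of_not_dvd {x c : ℕ} (h0 : x ≠ 0) (h : ¬ 2^c ∣ x) : padicValNat 2 x < c := by
  by_contra hc
  exact h ((pow_dvd_pow 2 (Nat.le_of_not_lt hc)).trans pow_padicValNat_dvd)

lemma not_dvd_of_padic_lt {x c : ℕ} (h0 : x ≠ 0) (h : padicValNat 2 x < c) : ¬ 2^c ∣ x := by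
  intro hd
  rcases (padicValNat_dvd_iff c x).mp hd with h' | h'
  · exact h0 h'
  · omega

lemma mod_of_padic {x ℓ : ℕ} (h0 : x ≠ 0) (hℓ : 1 ≤ ℓ) (h : padicValNat 2 x + 1 = ℓ) :
    x % 2^ℓ = 2^(ℓ-1) := by
  have hdvd : 2^(ℓ-1) ∣ x := by
    have := pow_padicValNat_dvd (p := 2) (n := x)
    rwa [show padicValNat 2 x = ℓ - 1 by omega] at this
  have hndvd : ¬ 2^ℓ ∣ x := not_dvd_of_padic_lt h0 (by omega)
  obtain ⟨c, hc⟩ := hdvd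
  have h2 : 2^ℓ = 2^(ℓ-1) * 2 := by rw [← pow_succ]; congr 1; omega
  have hodd : c % 2 = 1 := by
    rcases Nat.even_or_odd c with he | ho
    · obtain ⟨d, hd⟩ := he
      exfalso
      apply hndvd
      refine ⟨d, ?_⟩
      rw [hc, hd, h2]; ring
    · obtain ⟨d, hd⟩ := ho; omega
  have hc2 : c = 2 * (c / 2) + 1 := by omega
  have hx : x = 2^ℓ * (c / 2) + 2^(ℓ-1) := by
    calc x = 2^(ℓ-1) * c := hc
    _ = 2^(ℓ-1) * (2 * (c/2) + 1) := by rw [← hc2]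
    _ = (2^(ℓ-1) * 2) * (c/2) + 2^(ℓ-1) := by ring
    _ = 2^ℓ * (c/2) + 2^(ℓ-1) := by rw [h2]
  rw [hx, Nat.mul_add_mod]
  exact Nat.mod_eq_of_lt (Nat.pow_lt_pow_right one_lt_two (by omega))

lemma walk_div {V : Type*} {G : SimpleGraph V} {g : V → ℕ} {m ℓ : ℕ} (hℓm : ℓ < m)
    (h0 : ∀ v, g v ≠ 0)
    (hedge : ∀ u v, G.Adj u v → (g u + 1 = g v ∨ g v + 1 = g u) ∨
      padicValNat 2 (g u) + 1 = m ∨ padicValNat 2 (g v) + 1 = m) :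
    ∀ {u v : V} (p : G.Walk u v), (∀ w ∈ p.support, padicValNat 2 (g w) + 1 ≤ ℓ) →
      g u / 2^ℓ = g v / 2^ℓ := by
  intro u v p
  induction p with
  | nil => intro _; rfl
  | @cons a b c hadj q ih =>
    intro hs
    have ha : padicValNat 2 (g a) + 1 ≤ ℓ := hs a (by simp)
    have hb : padicValNat 2 (g b) + 1 ≤ ℓ := hs b (by simp)
    have tail : ∀ w ∈ q.support, padicValNat 2 (g w) + 1 ≤ ℓ := fun w hw =>
      hs w (by simp [SimpleGraph.Walk.support_cons, hw])
    have step : g a / 2^ℓ = g b / 2^ℓ := by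
      rcases hedge a b hadj with (h1 | h1) | h1 | h1
      · have : ¬ 2^ℓ ∣ g b := not_dvd_of_padic_lt (h0 b) (by omega)
        rw [← h1] at this ⊢
        rw [Nat.succ_div, if_neg this, add_zero]
      · have : ¬ 2^ℓ ∣ g a := not_dvd_of_padic_lt (h0 a) (by omega)
        rw [← h1] at this ⊢
        rw [Nat.succ_div, if_neg this, add_zero]
      · omega
      · omega
    rw [step]
    exact ih tail

lemma isRanking_of_g {V : Type*} (G : SimpleGraph V) (m : ℕ)
    (g : V → ℕ) (h0 : ∀ v, g v ≠ 0)
    (hinj : ∀ u v : V, g u = g v → u = v)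
    (hval : ∀ v, padicValNat 2 (g v) + 1 ≤ m)
    (hedge : ∀ u v, G.Adj u v → (g u + 1 = g v ∨ g v + 1 = g u) ∨
      padicValNat 2 (g u) + 1 = m ∨ padicValNat 2 (g v) + 1 = m)
    (hmax : ∀ u v : V, padicValNat 2 (g u) + 1 = m → padicValNat 2 (g v) + 1 = m → u = v) :
    IsRanking G m (fun v => padicValNat 2 (g v) + 1) := by
  constructor
  · exact fun v => ⟨Nat.succ_le_succ (Nat.zero_le _), hval v⟩
  · intro u v p _ huv hfeq
    have hfeq' : padicValNat 2 (g u) + 1 = padicValNat 2 (g v) + 1 := hfeq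
    by_contra hcon
    push_neg at hcon
    have hcon' : ∀ w ∈ p.support, padicValNat 2 (g w) + 1 ≤ padicValNat 2 (g u) + 1 := by
      intro w hw
      exact hcon w hw
    rcases eq_or_lt_of_le (hval u) with hm | hm
    · exact huv (hmax u v hm (by omega))
    · have hdiv := walk_div (ℓ := padicValNat 2 (g u) + 1) hm h0 hedge p hcon'
      have hmu : g u % 2^(padicValNat 2 (g u) + 1) = 2^(padicValNat 2 (g u) + 1 - 1) :=
        mod_of_padic (h0 u) (by omega) rfl
      have hmv : g v % 2^(padicValNat 2 (g u) + 1) = 2^(padicValNat 2 (g u) + 1 - 1) :=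
        mod_of_padic (h0 v) (by omega) (by omega)
      have : g u = g v := by
        have h1 := Nat.div_add_mod (g u) (2^(padicValNat 2 (g u) + 1))
        have h2 := Nat.div_add_mod (g v) (2^(padicValNat 2 (g u) + 1))
        rw [hdiv, hmu] at h1
        rw [hmv] at h2
        omega
      exact huv (hinj u v this)

lemma treedepth_le_of_ranking {V : Type*} (G : SimpleGraph V) (m : ℕ) (f : V → ℕ)
    (h : IsRanking G m f) : treedepth G ≤ m := Nat.sInf_le ⟨f, h⟩

lemma eq_of_dvd_lt {D x : ℕ} (h : D ∣ x) (h0 : 0 < x) (h2 : x < 2*D) : x = D := by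
  obtain ⟨c, rfl⟩ := h
  have hc1 : c ≠ 0 := by rintro rfl; omega
  have hc2 : c < 2 := by
    by_contra hc
    have := Nat.mul_le_mul_left D (Nat.le_of_not_lt hc)
    omega
  have : c = 1 := by omega
  rw [this, mul_one]

lemma no_mult {D x : ℕ} (h : D ∣ x) (h1 : 2*D < x) (h2 : x < 3*D) : False := by
  obtain ⟨c, rfl⟩ := h
  rcases Nat.lt_or_ge c 3 with h3 | h3
  · have := Nat.mul_le_mul_left D (show c ≤ 2 by omega)
    omega
  · have := Nat.mul_le_mul_left D h3
    omega

lemma not_dvd_between {D x : ℕ} (h0 : 0 < x) (hx : x < 2*D) (hne : x ≠ D) : ¬ D ∣ x :=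
  fun h => hne (eq_of_dvd_lt h h0 hx)

lemma padic_add_one_le {x c : ℕ} (h0 : x ≠ 0) (h : ¬ 2^c ∣ x) (hc : 1 ≤ c) :
    padicValNat 2 x + 1 ≤ c := by
  have := padic_lt_of_not_dvd h0 h
  omega

lemma dvd_of_padic_eq {x c : ℕ} (h : padicValNat 2 x = c) : 2^c ∣ x := by
  have := pow_padicValNat_dvd (p := 2) (n := x)
  rwa [h] at this

def gA (k t : ℕ) : Fin (2^(k-2)+1+t) → ℕ := fun v => v.val + 1

lemma caseA (k t : ℕ) (hk : 3 ≤ k) (ht : t ≤ 2^(k-2) - 2)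
    (e : Sym2 (Fin (2^(k-2)+1+t)))
    (he' : ∀ u v : Fin (2^(k-2)+1+t), u.val = t → v.val = 2^(k-2) → s(u,v) = e) :
    treedepth ((Rgraph k t).deleteEdges {e}) < k := by
  have hN2 : 2 ≤ 2^(k-2) := by
    calc 2 = 2^1 := by norm_num
    _ ≤ 2^(k-2) := Nat.pow_le_pow_right (by norm_num) (by omega)
  have hpow : 2^(k-1) = 2 * 2^(k-2) := by
    rw [show k-1 = (k-2)+1 by omega, pow_succ]; ring
  have htN : t + 2 ≤ 2^(k-2) := by omega
  have hpadN : padicValNat 2 (2^(k-2)) = k - 2 := padicValNat.prime_pow _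
  -- obligations
  have h0 : ∀ v, gA k t v ≠ 0 := by intro v; simp [gA]
  have hinj : ∀ u v : Fin (2^(k-2)+1+t), gA k t u = gA k t v → u = v := by
    intro u v h; simp only [gA] at h; exact Fin.ext (by omega)
  have hval : ∀ v, padicValNat 2 (gA k t v) + 1 ≤ k - 1 := by
    intro v
    have hlt := v.isLt
    refine padic_add_one_le (h0 v) ?_ (by omega)
    rw [hpow]
    exact not_dvd_between (by simp [gA]) (by simp only [gA]; omega) (by simp only [gA]; omega)
  have hmaxaux : ∀ v, padicValNat 2 (gA k t v) + 1 = k - 1 → gA k t v = 2^(k-2) := by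
    intro v hv
    have hdvd : 2^(k-2) ∣ gA k t v := dvd_of_padic_eq (by omega)
    have hlt := v.isLt
    exact eq_of_dvd_lt hdvd (by simp [gA]) (by simp only [gA]; omega)
  have hmax : ∀ u v : Fin (2^(k-2)+1+t), padicValNat 2 (gA k t u) + 1 = k - 1 →
      padicValNat 2 (gA k t v) + 1 = k - 1 → u = v := by
    intro u v hu hv
    exact hinj u v ((hmaxaux u hu).trans (hmaxaux v hv).symm)
  have hedge : ∀ u v, ((Rgraph k t).deleteEdges {e}).Adj u v →
      (gA k t u + 1 = gA k t v ∨ gA k t v + 1 = gA k t u) ∨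
      padicValNat 2 (gA k t u) + 1 = k - 1 ∨ padicValNat 2 (gA k t v) + 1 = k - 1 := by
    intro u v hadj
    rw [SimpleGraph.deleteEdges_adj, Rgraph, SimpleGraph.fromRel_adj] at hadj
    obtain ⟨⟨hne, hrel⟩, hE⟩ := hadj
    have hE' : s(u,v) ≠ e := by simpa using hE
    rcases hrel with (hc | ⟨h1, h2⟩) | (hc | ⟨h1, h2⟩)
    · left; left; simp only [gA]; omega
    · exact absurd (he' u v h1 h2) hE'
    · left; right; simp only [gA]; omega
    · exact absurd (Sym2.eq_swap.trans (he' v u h1 h2)) hE'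
  have hrank := isRanking_of_g ((Rgraph k t).deleteEdges {e}) (k-1) (gA k t) h0 hinj hval hedge hmax
  have hle := treedepth_le_of_ranking _ _ _ hrank
  omega

def gB1 (k t i : ℕ) : Fin (2^(k-2)+1+t) → ℕ :=
  fun v => if v.val ≤ i then v.val + 2*2^(k-2) + 1 else v.val

def gB2 (k t i : ℕ) : Fin (2^(k-2)+1+t) → ℕ :=
  fun v => if v.val ≤ i then v.val + (2^(k-2) - t) else v.val + (2*2^(k-2) - i)

lemma caseB1 (k t i : ℕ) (hk : 3 ≤ k) (ht : t ≤ 2^(k-2) - 2) (hit : i ≤ t)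
    (hi : i + 1 ≤ 2^(k-2) + t)
    (e : Sym2 (Fin (2^(k-2)+1+t)))
    (he' : ∀ u v : Fin (2^(k-2)+1+t), u.val = i → v.val = i + 1 → s(u,v) = e) :
    treedepth ((Rgraph k t).deleteEdges {e}) < k := by
  have hN2 : 2 ≤ 2^(k-2) := by
    calc 2 = 2^1 := by norm_num
    _ ≤ 2^(k-2) := Nat.pow_le_pow_right (by norm_num) (by omega)
  have hpow : 2^(k-1) = 2 * 2^(k-2) := by
    rw [show k-1 = (k-2)+1 by omega, pow_succ]; ring
  have htN : t + 2 ≤ 2^(k-2) := by omega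
  have hpadN : padicValNat 2 (2^(k-2)) = k - 2 := padicValNat.prime_pow _
  have h0 : ∀ v, gB1 k t i v ≠ 0 := by
    intro v; simp only [gB1]; split_ifs <;> omega
  have hinj : ∀ u v : Fin (2^(k-2)+1+t), gB1 k t i u = gB1 k t i v → u = v := by
    intro u v h
    have hu := u.isLt; have hv := v.isLt
    simp only [gB1] at h
    refine Fin.ext ?_
    split_ifs at h <;> omega
  have hval : ∀ v, padicValNat 2 (gB1 k t i v) + 1 ≤ k - 1 := by
    intro v
    have hlt := v.isLt
    refine padic_add_one_le (h0 v) ?_ (by omega)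
    rw [hpow]
    refine not_dvd_between ?_ ?_ ?_ <;> (simp only [gB1]; split_ifs <;> omega)
  have hmaxaux : ∀ v, padicValNat 2 (gB1 k t i v) + 1 = k - 1 → gB1 k t i v = 2^(k-2) := by
    intro v hv
    have hdvd : 2^(k-2) ∣ gB1 k t i v := dvd_of_padic_eq (by omega)
    have hlt := v.isLt
    by_cases hb : v.val ≤ i
    · exact absurd hdvd (by
        intro hd
        refine no_mult hd ?_ ?_ <;> (simp only [gB1, if_pos hb]; omega))
    · refine eq_of_dvd_lt hdvd ?_ ?_ <;> (simp only [gB1, if_neg hb]; omega)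
  have hmax : ∀ u v : Fin (2^(k-2)+1+t), padicValNat 2 (gB1 k t i u) + 1 = k - 1 →
      padicValNat 2 (gB1 k t i v) + 1 = k - 1 → u = v := by
    intro u v hu hv
    exact hinj u v ((hmaxaux u hu).trans (hmaxaux v hv).symm)
  have hedge : ∀ u v, ((Rgraph k t).deleteEdges {e}).Adj u v →
      (gB1 k t i u + 1 = gB1 k t i v ∨ gB1 k t i v + 1 = gB1 k t i u) ∨
      padicValNat 2 (gB1 k t i u) + 1 = k - 1 ∨ padicValNat 2 (gB1 k t i v) + 1 = k - 1 := by
    intro u v hadj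
    rw [SimpleGraph.deleteEdges_adj, Rgraph, SimpleGraph.fromRel_adj] at hadj
    obtain ⟨⟨hne, hrel⟩, hE⟩ := hadj
    have hE' : s(u,v) ≠ e := by simpa using hE
    have hu := u.isLt; have hv := v.isLt
    rcases hrel with (hc | ⟨h1, h2⟩) | (hc | ⟨h1, h2⟩)
    · by_cases hui : u.val = i
      · exact absurd (he' u v hui (by omega)) hE'
      · left; simp only [gB1]; split_ifs <;> omega
    · right; right
      have hgv : gB1 k t i v = 2^(k-2) := by
        simp only [gB1]; rw [if_neg (by omega)]; omega
      rw [hgv, hpadN]; omega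
    · by_cases hvi : v.val = i
      · exact absurd (Sym2.eq_swap.trans (he' v u hvi (by omega))) hE'
      · left; simp only [gB1]; split_ifs <;> omega
    · right; left
      have hgu : gB1 k t i u = 2^(k-2) := by
        simp only [gB1]; rw [if_neg (by omega)]; omega
      rw [hgu, hpadN]; omega
  have hrank := isRanking_of_g ((Rgraph k t).deleteEdges {e}) (k-1) (gB1 k t i) h0 hinj hval hedge hmax
  have hle := treedepth_le_of_ranking _ _ _ hrank
  omega

lemma caseB2 (k t i : ℕ) (hk : 3 ≤ k) (ht : t ≤ 2^(k-2) - 2) (hit : t < i)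
    (hi : i + 1 ≤ 2^(k-2) + t)
    (e : Sym2 (Fin (2^(k-2)+1+t)))
    (he' : ∀ u v : Fin (2^(k-2)+1+t), u.val = i → v.val = i + 1 → s(u,v) = e) :
    treedepth ((Rgraph k t).deleteEdges {e}) < k := by
  have hN2 : 2 ≤ 2^(k-2) := by
    calc 2 = 2^1 := by norm_num
    _ ≤ 2^(k-2) := Nat.pow_le_pow_right (by norm_num) (by omega)
  have hpow : 2^(k-1) = 2 * 2^(k-2) := by
    rw [show k-1 = (k-2)+1 by omega, pow_succ]; ring
  have htN : t + 2 ≤ 2^(k-2) := by omega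
  have hpadN : padicValNat 2 (2^(k-2)) = k - 2 := padicValNat.prime_pow _
  have h0 : ∀ v, gB2 k t i v ≠ 0 := by
    intro v; simp only [gB2]; split_ifs <;> omega
  have hinj : ∀ u v : Fin (2^(k-2)+1+t), gB2 k t i u = gB2 k t i v → u = v := by
    intro u v h
    have hu := u.isLt; have hv := v.isLt
    simp only [gB2] at h
    refine Fin.ext ?_
    split_ifs at h <;> omega
  have hval : ∀ v, padicValNat 2 (gB2 k t i v) + 1 ≤ k - 1 := by
    intro v
    have hlt := v.isLt
    refine padic_add_one_le (h0 v) ?_ (by omega)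
    rw [hpow]
    refine not_dvd_between ?_ ?_ ?_ <;> (simp only [gB2]; split_ifs <;> omega)
  have hmaxaux : ∀ v, padicValNat 2 (gB2 k t i v) + 1 = k - 1 → gB2 k t i v = 2^(k-2) := by
    intro v hv
    have hdvd : 2^(k-2) ∣ gB2 k t i v := dvd_of_padic_eq (by omega)
    have hlt := v.isLt
    by_cases hb : v.val ≤ i
    · refine eq_of_dvd_lt hdvd ?_ ?_ <;> (simp only [gB2, if_pos hb]; omega)
    · exact absurd hdvd (by
        intro hd
        refine no_mult hd ?_ ?_ <;> (simp only [gB2, if_neg hb]; omega))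
  have hmax : ∀ u v : Fin (2^(k-2)+1+t), padicValNat 2 (gB2 k t i u) + 1 = k - 1 →
      padicValNat 2 (gB2 k t i v) + 1 = k - 1 → u = v := by
    intro u v hu hv
    exact hinj u v ((hmaxaux u hu).trans (hmaxaux v hv).symm)
  have hedge : ∀ u v, ((Rgraph k t).deleteEdges {e}).Adj u v →
      (gB2 k t i u + 1 = gB2 k t i v ∨ gB2 k t i v + 1 = gB2 k t i u) ∨
      padicValNat 2 (gB2 k t i u) + 1 = k - 1 ∨ padicValNat 2 (gB2 k t i v) + 1 = k - 1 := by
    intro u v hadj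
    rw [SimpleGraph.deleteEdges_adj, Rgraph, SimpleGraph.fromRel_adj] at hadj
    obtain ⟨⟨hne, hrel⟩, hE⟩ := hadj
    have hE' : s(u,v) ≠ e := by simpa using hE
    have hu := u.isLt; have hv := v.isLt
    rcases hrel with (hc | ⟨h1, h2⟩) | (hc | ⟨h1, h2⟩)
    · by_cases hui : u.val = i
      · exact absurd (he' u v hui (by omega)) hE'
      · left; simp only [gB2]; split_ifs <;> omega
    · right; left
      have hgu : gB2 k t i u = 2^(k-2) := by
        simp only [gB2]; rw [if_pos (by omega)]; omega
      rw [hgu, hpadN]; omega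
    · by_cases hvi : v.val = i
      · exact absurd (Sym2.eq_swap.trans (he' v u hvi (by omega))) hE'
      · left; simp only [gB2]; split_ifs <;> omega
    · right; right
      have hgv : gB2 k t i v = 2^(k-2) := by
        simp only [gB2]; rw [if_pos (by omega)]; omega
      rw [hgv, hpadN]; omega
  have hrank := isRanking_of_g ((Rgraph k t).deleteEdges {e}) (k-1) (gB2 k t i) h0 hinj hval hedge hmax
  have hle := treedepth_le_of_ranking _ _ _ hrank
  omega


/-- For `k ≥ 3` and `0 ≤ t ≤ 2^(k-2) − 2`, deleting any edge of `R_{k,t}` yields a graph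
of tree-depth strictly less than `k`. -/
theorem treedepth_Rgraph_deleteEdge_lt (k t : ℕ) (hk : 3 ≤ k)
    (ht : t ≤ 2 ^ (k - 2) - 2) (e : Sym2 (Fin (2 ^ (k - 2) + 1 + t)))
    (he : e ∈ (Rgraph k t).edgeSet) :
    treedepth ((Rgraph k t).deleteEdges {e}) < k := by
  induction e using Sym2.ind with
  | _ a b =>
    rw [SimpleGraph.mem_edgeSet, Rgraph, SimpleGraph.fromRel_adj] at he
    obtain ⟨hab, hrel⟩ := he
    have ha := a.isLt; have hb := b.isLt
    rcases hrel with (hc | ⟨h1, h2⟩) | (hc | ⟨h1, h2⟩)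
    · by_cases hit : a.val ≤ t
      · refine caseB1 k t a.val hk ht hit (by omega) _ (fun u v hu hv => ?_)
        rw [show u = a from Fin.ext (by omega), show v = b from Fin.ext (by omega)]
      · refine caseB2 k t a.val hk ht (by omega) (by omega) _ (fun u v hu hv => ?_)
        rw [show u = a from Fin.ext (by omega), show v = b from Fin.ext (by omega)]
    · refine caseA k t hk ht _ (fun u v hu hv => ?_)
      rw [show u = a from Fin.ext (by omega), show v = b from Fin.ext (by omega)]
    · by_cases hit : b.val ≤ t
      · refine caseB1 k t b.val hk ht hit (by omega) _ (fun u v hu hv => ?_)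
        rw [show u = b from Fin.ext (by omega), show v = a from Fin.ext (by omega)]
        exact Sym2.eq_swap
      · refine caseB2 k t b.val hk ht (by omega) (by omega) _ (fun u v hu hv => ?_)
        rw [show u = b from Fin.ext (by omega), show v = a from Fin.ext (by omega)]
        exact Sym2.eq_swap
    · refine caseA k t hk ht _ (fun u v hu hv => ?_)
      rw [show u = b from Fin.ext (by omega), show v = a from Fin.ext (by omega)]
      exact Sym2.eq_swap
end

section
/- Let k ≥ 1 and 1 ≤ s ≤ k, let 1 ≤ q ≤ s, and let π_1 + … + π_q = s be a partition of s into positive integers. Let Q be the graph whose vertex set is the disjoint union of sets B_1, …, B_q with |B_i| = π_i and sets H_1, …, H_q each of size k − s, in which all vertices of B_1 ∪ … ∪ B_q are pairwise adjacent, each H_i induces a complete graph, and every vertex of B_i is adjacent to every vertex of H_i for each i (with no other adjacencies). Then for every edge e of Q, the graph Q − e obtained by deleting e has tree-depth at most k − 1. -/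
/-- The block index of a vertex of the graph `Q`: vertices are either in one of the
parts `B_i` of the central clique (left summand, `Sum.inl ⟨i, _⟩`) or in the outer
clique `H_i` (right summand, `Sum.inr (i, _)`). -/
def qIdx {q h : ℕ} {π : Fin q → ℕ} : ((Σ i : Fin q, Fin (π i)) ⊕ (Fin q × Fin h)) → Fin q
  | Sum.inl x => x.1
  | Sum.inr x => x.1

/-- The graph `Q`: the central clique `B_1 ∪ ⋯ ∪ B_q` (with `|B_i| = π i`) together with
disjoint cliques `H_1, …, H_q` each of size `h`, where every vertex of `B_i` is joined to
every vertex of `H_i`. Two distinct vertices are adjacent iff they both lie in the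
central clique, or they have the same block index. -/
def Qgraph (q h : ℕ) (π : Fin q → ℕ) :
    SimpleGraph ((Σ i : Fin q, Fin (π i)) ⊕ (Fin q × Fin h)) where
  Adj x y := x ≠ y ∧ ((x.isLeft ∧ y.isLeft) ∨ qIdx x = qIdx y)
  symm := ⟨by
    rintro x y ⟨hne, h | h⟩
    · exact ⟨hne.symm, Or.inl ⟨h.2, h.1⟩⟩
    · exact ⟨hne.symm, Or.inr h.symm⟩⟩
  loopless := ⟨fun x hx => hx.1 rfl⟩

/-
Put `h = k - s`. Apart from at most two vertices `D` of the central clique `B` (the ends of `e`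
in `B`, or a single vertex of `B_i` if `e` lies in `H_i`), the vertices of `B` get the distinct
top labels `h + |D|, …, k - 1`. What is left of block `i` is the clique `(B_i ∩ D) ∪ H_i`, possibly
missing the edge `e`; it is labelled injectively by `1, …, h + |D| - 1`, except that both ends of
`e` get label `1`. A path between two equally labelled vertices then either changes block, which
it can only do through a top vertex, or starts at an end of `e`, whose neighbours all carry
larger labels.
-/

open SimpleGraph

section Ranking

variable {V : Type*} {G : SimpleGraph V} {k : ℕ} {f : V → ℕ}

theorem isRanking_of_separated (hf : ∀ v, 1 ≤ f v ∧ f v ≤ k)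
    (hsep : ∀ u v, u ≠ v → f u = f v → ∃ S : Set V, u ∈ S ∧ v ∉ S ∧
      ∀ x y, G.Adj x y → x ∈ S → y ∉ S → f u < f x ∨ f u < f y) :
    IsRanking G k f := by
  refine ⟨hf, fun u v p _ huv hfuv => ?_⟩
  obtain ⟨S, huS, hvS, hS⟩ := hsep u v huv hfuv
  obtain ⟨d, hd, hdS, hdS'⟩ := p.exists_boundary_dart S huS hvS
  rcases hS _ _ d.adj hdS hdS' with h | h
  · exact ⟨_, p.dart_fst_mem_support_of_mem_darts hd, h⟩
  · exact ⟨_, p.dart_snd_mem_support_of_mem_darts hd, h⟩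

theorem isRanking_of_blocks {ι : Type*} (blk : V → ι) (t : ℕ) (hf : ∀ v, 1 ≤ f v ∧ f v ≤ k)
    (htop : Set.InjOn f {v | t ≤ f v})
    (hcross : ∀ x y, G.Adj x y → blk x ≠ blk y → t ≤ f x ∨ t ≤ f y)
    (hblock : ∀ u v, u ≠ v → blk u = blk v → f u = f v → f u < t →
      (∀ w, G.Adj u w → f u < f w) ∨ ∀ w, G.Adj v w → f v < f w) :
    IsRanking G k f := by
  refine isRanking_of_separated hf fun u v huv hfuv => ?_
  have hlow : f u < t := not_le.1 fun h => huv (htop h (hfuv ▸ h : t ≤ f v) hfuv)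
  by_cases hblk : blk u = blk v
  · rcases hblock u v huv hblk hfuv hlow with hmin | hmin
    · refine ⟨{u}, rfl, huv.symm, fun x y hxy hx _ => ?_⟩
      rw [Set.mem_singleton_iff.1 hx] at hxy
      exact Or.inr (hmin y hxy)
    · refine ⟨{v}ᶜ, huv, by simp, fun x y hxy _ hy => ?_⟩
      rw [Set.notMem_compl_iff, Set.mem_singleton_iff] at hy
      subst hy
      exact Or.inl (hfuv ▸ hmin x hxy.symm)
  · refine ⟨{x | blk x = blk u}, rfl, Ne.symm hblk, fun x y hxy hx hy => ?_⟩
    rcases hcross x y hxy (fun h => hy (h.symm.trans hx)) with h | h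
    · exact Or.inl (hlow.trans_le h)
    · exact Or.inr (hlow.trans_le h)

theorem treedepth_le_of_isRanking (hf : IsRanking G k f) : treedepth G ≤ k :=
  Nat.sInf_le ⟨f, hf⟩

end Ranking

theorem exists_equiv_fin_val_eq_zero_iff {α : Type*} [Fintype α] {n : ℕ}
    (hn : Fintype.card α = n) (a : α) : ∃ e : α ≃ Fin n, ∀ c, (e c : ℕ) = 0 ↔ c = a := by
  have hpos : 0 < n := hn ▸ Fintype.card_pos_iff.2 ⟨a⟩
  let e₀ := Fintype.equivFinOfCardEq hn
  let e := e₀.trans (Equiv.swap (e₀ a) ⟨0, hpos⟩)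
  have ha : e a = ⟨0, hpos⟩ := by simp [e]
  exact ⟨e, fun c => by rw [← e.apply_eq_iff_eq, ha, Fin.ext_iff]⟩

theorem exists_equiv_fin_val_eq_zero_eq_one {α : Type*} [Fintype α] {n : ℕ}
    (hn : Fintype.card α = n) {a b : α} (hab : a ≠ b) :
    ∃ e : α ≃ Fin n, (e a : ℕ) = 0 ∧ (e b : ℕ) = 1 ∧ ∀ c, (e c : ℕ) < 2 → c = a ∨ c = b := by
  obtain ⟨e₀, he₀⟩ := exists_equiv_fin_val_eq_zero_iff hn a
  have hb : (e₀ b : ℕ) ≠ 0 := fun h => hab ((he₀ b).1 h).symm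
  have hn : 1 < n := by have := (e₀ b).isLt; omega
  let e := e₀.trans (Equiv.swap (e₀ b) ⟨1, hn⟩)
  have ha : (e a : ℕ) = 0 := by
    rw [Equiv.trans_apply, Equiv.swap_apply_of_ne_of_ne (e₀.injective.ne hab)
      (fun h => by simpa [h] using (he₀ a).2 rfl), (he₀ a).2 rfl]
  have hb' : (e b : ℕ) = 1 := by simp [e]
  refine ⟨e, ha, hb', fun c hc => ?_⟩
  rcases (by omega : (e c : ℕ) = e a ∨ (e c : ℕ) = e b) with h | h
  exacts [Or.inl (e.injective (Fin.ext h)), Or.inr (e.injective (Fin.ext h))]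

section Qgraph

variable {q h : ℕ} {π : Fin q → ℕ}

@[simp]
theorem Qgraph.adj_inl_inl {b b' : Σ i : Fin q, Fin (π i)} :
    (Qgraph q h π).Adj (Sum.inl b) (Sum.inl b') ↔ b ≠ b' := by
  simp [Qgraph]

@[simp]
theorem Qgraph.adj_inl_inr {b : Σ i : Fin q, Fin (π i)} {y : Fin q × Fin h} :
    (Qgraph q h π).Adj (Sum.inl b) (Sum.inr y) ↔ b.1 = y.1 := by
  simp [Qgraph, qIdx]

@[simp]
theorem Qgraph.adj_inr_inr {y y' : Fin q × Fin h} :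
    (Qgraph q h π).Adj (Sum.inr y) (Sum.inr y') ↔ y ≠ y' ∧ y.1 = y'.1 := by
  simp [Qgraph, qIdx]

theorem isRanking_Qgraph_deleteEdges {k t : ℕ}
    {u₀ v₀ : (Σ i : Fin q, Fin (π i)) ⊕ (Fin q × Fin h)}
    {fB : (Σ i : Fin q, Fin (π i)) → ℕ} {fH : Fin q × Fin h → ℕ}
    (hB : ∀ b, 1 ≤ fB b ∧ fB b ≤ k) (hH : ∀ y, 1 ≤ fH y ∧ fH y < t) (ht : t ≤ k + 1)
    (htop : Set.InjOn fB {b | t ≤ fB b})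
    (hcentral : ∀ b b', b ≠ b' → fB b < t → fB b' < t → s(Sum.inl b, Sum.inl b') = s(u₀, v₀))
    (hBH : ∀ b y, b.1 = y.1 → fB b = fH y → s(Sum.inl b, Sum.inr y) = s(u₀, v₀))
    (hHH : ∀ y y', y ≠ y' → y.1 = y'.1 → fH y = fH y' → s(Sum.inr y, Sum.inr y') = s(u₀, v₀))
    (hmin : ∀ w, w ≠ v₀ → (Qgraph q h π).Adj u₀ w → Sum.elim fB fH u₀ < Sum.elim fB fH w) :
    IsRanking ((Qgraph q h π).deleteEdges {s(u₀, v₀)}) k (Sum.elim fB fH) := by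
  have hmin' : ∀ w, ((Qgraph q h π).deleteEdges {s(u₀, v₀)}).Adj u₀ w →
      Sum.elim fB fH u₀ < Sum.elim fB fH w := by
    intro w hw
    rw [deleteEdges_adj, Set.mem_singleton_iff] at hw
    exact hmin w (by rintro rfl; exact hw.2 rfl) hw.1
  refine isRanking_of_blocks qIdx t ?_ ?_ ?_ ?_
  · rintro (b | y)
    · exact hB b
    · exact ⟨(hH y).1, by have := (hH y).2; simp only [Sum.elim_inr]; omega⟩
  · rintro (b | y) hu (b' | y') hv heq <;> simp only [Set.mem_ofPred_eq, Sum.elim_inl,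
      Sum.elim_inr] at hu hv heq
    · exact congrArg _ (htop hu hv heq)
    all_goals first | exact absurd hu (hH y).2.not_ge | exact absurd hv (hH y').2.not_ge
  · rintro (b | y) (b' | y') hxy hne
    · rw [deleteEdges_adj, Set.mem_singleton_iff, Qgraph.adj_inl_inl] at hxy
      by_contra! hlow
      exact hxy.2 (hcentral b b' hxy.1 hlow.1 hlow.2)
    · exact absurd (Qgraph.adj_inl_inr.1 hxy.1) hne
    · exact absurd (Qgraph.adj_inl_inr.1 hxy.1.symm).symm hne
    · exact absurd (Qgraph.adj_inr_inr.1 hxy.1).2 hne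
  · intro u v huv hblk hfuv hlow
    have he : s(u, v) = s(u₀, v₀) := by
      rcases u with b | y <;> rcases v with b' | y' <;>
        simp only [qIdx, Sum.elim_inl, Sum.elim_inr] at hblk hfuv hlow
      · exact hcentral b b' (fun h => huv (congrArg _ h)) hlow (hfuv ▸ hlow)
      · exact hBH b y' hblk hfuv
      · rw [Sym2.eq_swap]; exact hBH b' y hblk.symm hfuv.symm
      · exact hHH y y' (fun h => huv (congrArg _ h)) hblk hfuv
    rcases Sym2.eq_iff.1 he with ⟨rfl, -⟩ | ⟨-, rfl⟩
    · exact Or.inl hmin'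
    · exact Or.inr hmin'

theorem exists_isRanking_Qgraph_deleteEdges_inl_inl {s : ℕ} (hsum : ∑ i, π i = s)
    {b₁ b₂ : Σ i : Fin q, Fin (π i)} (hb : b₁ ≠ b₂) :
    ∃ f, IsRanking ((Qgraph q h π).deleteEdges {s(Sum.inl b₁, Sum.inl b₂)}) (h + s - 1) f := by
  obtain ⟨τ, hτ₁, hτ₂, hτ⟩ := exists_equiv_fin_val_eq_zero_eq_one
    (by simp [hsum] : Fintype.card (Σ i : Fin q, Fin (π i)) = s) hb
  have hs : 2 ≤ s := by have := (τ b₂).isLt; omega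
  refine ⟨_, isRanking_Qgraph_deleteEdges (t := h + 2)
    (fB := fun w => if (τ w : ℕ) < 2 then 1 else h + τ w)
    (fH := fun y => if y.1 = b₁.1 ∨ y.1 = b₂.1 then 2 + y.2 else 1 + y.2)
    (fun w => ?_) (fun y => ?_) (by omega) (fun w hw w' hw' heq => ?_)
    (fun w w' hne hw hw' => ?_) (fun w y hwy heq => ?_) (fun y y' hne hyy heq => ?_) ?_⟩
  · have := (τ w).isLt; split_ifs <;> omega
  · have := y.2.isLt; split_ifs <;> omega
  · simp only [Set.mem_ofPred_eq] at hw hw' heq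
    split_ifs at hw hw' heq <;> try omega
    exact τ.injective (Fin.ext (by omega))
  · split_ifs at hw with hlt <;> split_ifs at hw' with hlt' <;> try omega
    rcases hτ w hlt with rfl | rfl <;> rcases hτ w' hlt' with rfl | rfl
    all_goals first | exact absurd rfl hne | rfl | exact Sym2.eq_swap
  · exfalso
    by_cases hw : (τ w : ℕ) < 2
    · rcases hτ w hw with rfl | rfl <;> simp [hτ₁, hτ₂, ← hwy] at heq <;> omega
    · have := y.2.isLt; rw [if_neg hw] at heq; split_ifs at heq <;> omega
  · simp only [hyy] at heq
    split_ifs at heq <;> exact absurd (Prod.ext hyy (Fin.ext (by omega))) hne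
  · rintro (w | y) hw hadj <;>
      simp only [Sum.elim_inl, Sum.elim_inr, hτ₁, Nat.ofNat_pos, ↓reduceIte]
    · split_ifs with hlt
      · rcases hτ w hlt with rfl | rfl
        · exact absurd rfl hadj.ne
        · exact absurd rfl hw
      · omega
    · rw [if_pos (Or.inl (Qgraph.adj_inl_inr.1 hadj).symm)]
      omega

theorem exists_isRanking_Qgraph_deleteEdges_inl_inr {s : ℕ} (hsum : ∑ i, π i = s)
    {b : Σ i : Fin q, Fin (π i)} {x : Fin q × Fin h} (hbx : b.1 = x.1) :
    ∃ f, IsRanking ((Qgraph q h π).deleteEdges {s(Sum.inl b, Sum.inr x)}) (h + s - 1) f := by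
  obtain ⟨τ, hτ⟩ := exists_equiv_fin_val_eq_zero_iff
    (by simp [hsum] : Fintype.card (Σ i : Fin q, Fin (π i)) = s) b
  obtain ⟨σ, hσ⟩ := exists_equiv_fin_val_eq_zero_iff (Fintype.card_fin h) x.2
  have hs : 1 ≤ s := (τ b).pos
  have hh : 1 ≤ h := x.2.pos
  refine ⟨_, isRanking_Qgraph_deleteEdges (t := h + 1)
    (fB := fun w => if (τ w : ℕ) = 0 then 1 else h + τ w) (fH := fun y => 1 + σ y.2)
    (fun w => ?_) (fun y => ?_) (by omega) (fun w hw w' hw' heq => ?_)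
    (fun w w' hne hw hw' => ?_) (fun w y hwy heq => ?_) (fun y y' hne hyy heq => ?_) ?_⟩
  · have := (τ w).isLt; split_ifs <;> omega
  · have := (σ y.2).isLt; omega
  · simp only [Set.mem_ofPred_eq] at hw hw' heq
    split_ifs at hw hw' heq <;> try omega
    exact τ.injective (Fin.ext (by omega))
  · split_ifs at hw with h0 <;> split_ifs at hw' with h0' <;> try omega
    exact absurd (((hτ w).1 h0).trans ((hτ w').1 h0').symm) hne
  · split_ifs at heq with h0
    · obtain rfl := (hτ w).1 h0
      rw [show y = x from Prod.ext (hwy.symm.trans hbx) ((hσ _).1 (by omega))]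
    · have := (σ y.2).isLt; omega
  · exact absurd (Prod.ext hyy (σ.injective (Fin.ext (by omega)))) hne
  · rintro (w | y) hw hadj <;> simp only [Sum.elim_inl, Sum.elim_inr, (hτ b).2 rfl, ↓reduceIte]
    · split_ifs with h0
      · exact absurd ((hτ w).1 h0) (Qgraph.adj_inl_inl.1 hadj).symm
      · omega
    · have : (σ y.2 : ℕ) ≠ 0 := fun h0 =>
        hw (congrArg _ (Prod.ext ((Qgraph.adj_inl_inr.1 hadj).symm.trans hbx) ((hσ _).1 h0)))
      omega

theorem exists_isRanking_Qgraph_deleteEdges_inr_inr {s : ℕ} (hπ : ∀ i, 1 ≤ π i)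
    (hsum : ∑ i, π i = s) {x₁ x₂ : Fin q × Fin h} (hx : x₁ ≠ x₂) (hx₁₂ : x₁.1 = x₂.1) :
    ∃ f, IsRanking ((Qgraph q h π).deleteEdges {s(Sum.inr x₁, Sum.inr x₂)}) (h + s - 1) f := by
  have hj : x₁.2 ≠ x₂.2 := fun hj => hx (Prod.ext hx₁₂ hj)
  obtain ⟨τ, hτ₀⟩ := exists_equiv_fin_val_eq_zero_iff
    (by simp [hsum] : Fintype.card (Σ i : Fin q, Fin (π i)) = s) ⟨x₁.1, ⟨0, hπ x₁.1⟩⟩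
  obtain ⟨σ, hσ₁, hσ₂, hσ₀⟩ := exists_equiv_fin_val_eq_zero_eq_one (Fintype.card_fin h) hj
  have hs : 1 ≤ s := (τ ⟨x₁.1, ⟨0, hπ x₁.1⟩⟩).pos
  have hh : 2 ≤ h := by have := (σ x₂.2).isLt; omega
  have hτ : ∀ w, (τ w : ℕ) = 0 → w.1 = x₁.1 := fun w hw => by rw [(hτ₀ w).1 hw]
  have hσ : ∀ y : Fin q × Fin h, y.1 = x₁.1 → (σ y.2 : ℕ) < 2 → y = x₁ ∨ y = x₂ :=
    fun y hy hlt => (hσ₀ y.2 hlt).imp (Prod.ext hy) (Prod.ext (hy.trans hx₁₂))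
  refine ⟨_, isRanking_Qgraph_deleteEdges (t := h + 1) (fB := fun w => h + τ w)
    (fH := fun y => if y.1 = x₁.1 then max 1 (σ y.2) else 1 + y.2)
    (fun w => ?_) (fun y => ?_) (by omega) (fun w _ w' _ heq => ?_)
    (fun w w' hne hw hw' => ?_) (fun w y hwy heq => ?_) (fun y y' hne hyy heq => ?_) ?_⟩
  · have := (τ w).isLt; omega
  · have := (σ y.2).isLt; have := y.2.isLt; split_ifs <;> omega
  · beta_reduce at heq
    exact τ.injective (Fin.ext (by omega))
  · exact absurd (τ.injective (Fin.ext (by omega))) hne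
  · exfalso
    have := (σ y.2).isLt
    by_cases h0 : (τ w : ℕ) = 0
    · rw [if_pos (hwy.symm.trans (hτ w h0))] at heq; omega
    · split_ifs at heq <;> omega
  · simp only [hyy] at heq
    split_ifs at heq with hy
    · by_cases hlt : (σ y.2 : ℕ) < 2 ∧ (σ y'.2 : ℕ) < 2
      · rcases hσ y (hyy.trans hy) hlt.1 with rfl | rfl <;> rcases hσ y' hy hlt.2 with rfl | rfl
        all_goals first | exact absurd rfl hne | rfl | exact Sym2.eq_swap
      · exact absurd (Prod.ext hyy (σ.injective (Fin.ext (by omega)))) hne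
    · exact absurd (Prod.ext hyy (Fin.ext (by omega))) hne
  · rintro (w | y) hw hadj <;> simp only [Sum.elim_inl, Sum.elim_inr, hσ₁, ↓reduceIte]
    · omega
    · obtain ⟨hne, hy⟩ := Qgraph.adj_inr_inr.1 hadj
      have : ¬ (σ y.2 : ℕ) < 2 := fun hlt =>
        (hσ y hy.symm hlt).elim (fun h₁ => hne h₁.symm) (fun h₂ => hw (congrArg _ h₂))
      rw [if_pos hy.symm]
      omega

end Qgraph

theorem treedepth_Qgraph_deleteEdge_le_general (k s q : ℕ)
    (hsk : s ≤ k) (π : Fin q → ℕ) (hπ : ∀ i, 1 ≤ π i)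
    (hsum : ∑ i, π i = s)
    (e : Sym2 ((Σ i : Fin q, Fin (π i)) ⊕ (Fin q × Fin (k - s))))
    (he : e ∈ (Qgraph q (k - s) π).edgeSet) :
    treedepth ((Qgraph q (k - s) π).deleteEdges {e}) ≤ k - 1 := by
  suffices ∃ f, IsRanking ((Qgraph q (k - s) π).deleteEdges {e}) (k - s + s - 1) f by
    obtain ⟨f, hf⟩ := this
    exact treedepth_le_of_isRanking (Nat.sub_add_cancel hsk ▸ hf)
  induction e using Sym2.ind with | _ u v => ?_
  rw [mem_edgeSet] at he
  rcases u with b | x <;> rcases v with b' | x'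
  · exact exists_isRanking_Qgraph_deleteEdges_inl_inl hsum (Qgraph.adj_inl_inl.1 he)
  · exact exists_isRanking_Qgraph_deleteEdges_inl_inr hsum (Qgraph.adj_inl_inr.1 he)
  · rw [Sym2.eq_swap]
    exact exists_isRanking_Qgraph_deleteEdges_inl_inr hsum (Qgraph.adj_inl_inr.1 he.symm)
  · obtain ⟨hne, hx⟩ := Qgraph.adj_inr_inr.1 he
    exact exists_isRanking_Qgraph_deleteEdges_inr_inr hπ hsum hne hx

/-- For `1 ≤ s ≤ k`, `1 ≤ q ≤ s`, and a partition `π_1 + ⋯ + π_q = s` of `s` into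
positive integers, deleting any edge of the graph `Q` (built from cliques `B_i` with
`|B_i| = π i` and `H_i` with `|H_i| = k − s`) yields a graph of tree-depth at most
`k − 1`. -/
theorem treedepth_Qgraph_deleteEdge_le (k s q : ℕ) (hk : 1 ≤ k) (hs1 : 1 ≤ s)
    (hsk : s ≤ k) (hq1 : 1 ≤ q) (hqs : q ≤ s) (π : Fin q → ℕ) (hπ : ∀ i, 1 ≤ π i)
    (hsum : ∑ i, π i = s)
    (e : Sym2 ((Σ i : Fin q, Fin (π i)) ⊕ (Fin q × Fin (k - s))))
    (he : e ∈ (Qgraph q (k - s) π).edgeSet) :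
    treedepth ((Qgraph q (k - s) π).deleteEdges {e}) ≤ k - 1 :=
  treedepth_Qgraph_deleteEdge_le_general k s q hsk π hπ hsum e he
end
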